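/- arXiv:2111.10802 — 5 statements merged into one kernel-verified Lean document; each statement's English description precedes it below -/
import Mathlib

section
/- Let 0 < r_7 < r_8 be reals, let (q_n) be positive integers with q_n → ∞, and let (ε_n) be arbitrary positive reals. Set s_n := r_8^{q_n}/(r_8^{q_n}+ε_n), X_n := {z ∈ ℂ : z^{q_n} ≠ ε_n and |z^{q_n}/(z^{q_n}−ε_n)| < s_n}, and Y_n := X_n ∖ {z : |z| ≤ r_7}. Then for every nonempty open set U ⊆ H(r_7, r_8), liminf_{n→∞} dens_U(Y_n) ≥ 1/2. -/
/-!
Write `w = z ^ q` for `q = q_n`. Choose a compact `K ⊆ U` carrying almost all of the area of `U`;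
it lies in a disc `‖z‖ < ρ` with `ρ < r₈`, and we put `δ = (ρ / r₈) ^ q → 0`. Every `z ∈ K` with
`Re w ≤ -δ‖w‖` lies in `X_n`, because then `r₈ ^ q * Re w ≤ -‖w‖²`. The rotation
`z ↦ exp (iπ/q) z` negates `w` and moves `K` only slightly for large `q`, so it maps the part of `K`
where `Re w ≥ δ‖w‖` into the previous part, up to `U \ K`. On the rest of `K` the power `w` is
close to the imaginary axis; this part has `M` pairwise disjoint rotated copies in the disc of
radius `r₈` as soon as `4δM < 1`, so its area is `O(1/M)`. Hence
`area U ≤ 2 area (U ∩ Y_n) + o(1)`.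
-/

open Filter MeasureTheory Set

noncomputable section

def dens (U X : Set ℂ) : ℝ := (volume (U ∩ X)).toReal / (volume U).toReal

open Metric Topology Complex
open scoped ENNReal

lemma Complex.measurePreserving_mul_left_of_norm_eq_one {u : ℂ} (hu : ‖u‖ = 1) :
    MeasurePreserving (u * ·) volume volume :=
  (rotation ⟨u, mem_sphere_zero_iff_norm.2 hu⟩).measurePreserving

lemma Complex.norm_div_sub_ofReal_lt {w : ℂ} {b e : ℝ} (he : 0 < e) (hwb : ‖w‖ < b)
    (hre : b * w.re ≤ -‖w‖ ^ 2) : w ≠ e ∧ ‖w / (w - e)‖ < b / (b + e) := by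
  have hb : 0 < b := (norm_nonneg w).trans_lt hwb
  have hwe : w ≠ e := by
    rintro rfl
    simp only [ofReal_re, norm_real, Real.norm_eq_abs, sq_abs] at hre
    nlinarith
  refine ⟨hwe, ?_⟩
  have hsq : ‖w - e‖ ^ 2 = ‖w‖ ^ 2 - 2 * e * w.re + e ^ 2 := by
    simp only [Complex.sq_norm, normSq_apply, sub_re, sub_im, ofReal_re, ofReal_im, sub_zero]
    ring
  rw [norm_div, div_lt_div_iff₀ (norm_pos_iff.2 (sub_ne_zero.2 hwe)) (by positivity)]
  refine lt_of_pow_lt_pow_left₀ 2 (by positivity) ?_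
  have hA : ‖w‖ ^ 2 < b ^ 2 := pow_lt_pow_left₀ hwb (norm_nonneg w) two_ne_zero
  rw [mul_pow, mul_pow, hsq]
  have hre' : 0 ≤ -(b * w.re + ‖w‖ ^ 2) := by linarith
  nlinarith [mul_nonneg (mul_nonneg he.le hb.le) hre', mul_pos (pow_pos he 2) (sub_pos.2 hA)]

lemma Complex.abs_im_lt_of_abs_re_lt {u w : ℂ} {δ : ℝ} (hu : ‖u‖ = 1) (hδ : δ ≤ 1 / 2)
    (hw : |w.re| < δ * ‖w‖) (huw : |(u * w).re| < δ * ‖u * w‖) : |u.im| < 4 * δ := by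
  rw [norm_mul, hu, one_mul, mul_re] at huw
  have hδw : 0 < δ * ‖w‖ := (abs_nonneg _).trans_lt hw
  have hA : 0 < ‖w‖ := (norm_nonneg w).lt_of_ne fun h ↦ by simp [← h] at hδw
  have hδ0 : 0 < δ := pos_of_mul_pos_left hδw hA.le
  have him : ‖w‖ / 2 ≤ |w.im| := by
    have hnorm : ‖w‖ ^ 2 = w.re ^ 2 + w.im ^ 2 := by
      rw [Complex.sq_norm, normSq_apply]; ring
    have hre : w.re ^ 2 ≤ (δ * ‖w‖) ^ 2 := by
      rw [← sq_abs]; exact pow_le_pow_left₀ (abs_nonneg _) hw.le 2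
    rw [← pow_le_pow_iff_left₀ (by positivity) (abs_nonneg _) two_ne_zero, sq_abs]
    nlinarith [mul_le_mul_of_nonneg_right (mul_le_mul hδ hδ hδ0.le (by norm_num)) (sq_nonneg ‖w‖)]
  have hcross : |u.im * w.im| < 2 * δ * ‖w‖ := by
    calc |u.im * w.im| ≤ |u.re * w.re - u.im * w.im| + |u.re * w.re| := by
          simpa [add_comm] using abs_sub (u.re * w.re) (u.re * w.re - u.im * w.im)
      _ < δ * ‖w‖ + 1 * (δ * ‖w‖) := by
          rw [abs_mul]
          exact add_lt_add_of_lt_of_le huw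
            (mul_le_mul (hu ▸ abs_re_le_norm u) hw.le (abs_nonneg _) zero_le_one)
      _ = 2 * δ * ‖w‖ := by ring
  rw [abs_mul] at hcross
  nlinarith [abs_nonneg u.im]

lemma Complex.exp_pi_div_mul_I_pow {k : ℕ} (hk : k ≠ 0) :
    exp (↑(Real.pi / k) * I) ^ k = -1 := by
  rw [← Complex.exp_nat_mul, ← Complex.exp_pi_mul_I]
  congr 1
  push_cast
  field_simp

lemma MeasureTheory.card_mul_measure_le_of_pairwise_disjoint {α ι : Type*} [MeasurableSpace α]
    [Fintype ι] {μ : Measure α} {s t : Set α} {f : ι → α → α}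
    (hf : ∀ j, MeasurePreserving (f j) μ μ) (hs : MeasurableSet s)
    (hdisj : Pairwise fun i j ↦ Disjoint (f i ⁻¹' s) (f j ⁻¹' s)) (ht : ∀ j, f j ⁻¹' s ⊆ t) :
    Fintype.card ι * μ s ≤ μ t :=
  calc (Fintype.card ι : ℝ≥0∞) * μ s = ∑ j, μ (f j ⁻¹' s) := by
        simp [(hf _).measure_preimage hs.nullMeasurableSet]
    _ = μ (⋃ j ∈ Finset.univ, f j ⁻¹' s) :=
        (measure_biUnion_finset (hdisj.set_pairwise _) fun j _ ↦ hs.preimage (hf j).measurable).symm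
    _ ≤ μ t := measure_mono (iUnion₂_subset fun j _ ↦ ht j)

def negPowCone (k : ℕ) (δ : ℝ) : Set ℂ := {z | (z ^ k).re ≤ -(δ * ‖z ^ k‖)}

def posPowCone (k : ℕ) (δ : ℝ) : Set ℂ := {z | δ * ‖z ^ k‖ ≤ (z ^ k).re}

def imPowCone (k : ℕ) (δ : ℝ) : Set ℂ := {z | |(z ^ k).re| < δ * ‖z ^ k‖}

lemma measurableSet_negPowCone (k : ℕ) (δ : ℝ) : MeasurableSet (negPowCone k δ) :=
  measurableSet_le (by fun_prop) (by fun_prop)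

lemma measurableSet_imPowCone (k : ℕ) (δ : ℝ) : MeasurableSet (imPowCone k δ) :=
  measurableSet_lt (by fun_prop) (by fun_prop)

lemma negPowCone_union_posPowCone_union_imPowCone (k : ℕ) (δ : ℝ) :
    negPowCone k δ ∪ posPowCone k δ ∪ imPowCone k δ = univ := by
  refine eq_univ_of_forall fun z ↦ ?_
  rcases le_or_gt (z ^ k).re (-(δ * ‖z ^ k‖)) with h₁ | h₁
  · exact Or.inl (Or.inl h₁)
  rcases le_or_gt (δ * ‖z ^ k‖) (z ^ k).re with h₂ | h₂
  · exact Or.inl (Or.inr h₂)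
  · exact Or.inr (abs_lt.2 ⟨h₁, h₂⟩)

lemma mul_mem_negPowCone {k : ℕ} {δ : ℝ} {ζ z : ℂ} (hζ : ζ ^ k = -1) (hz : z ∈ posPowCone k δ) :
    ζ * z ∈ negPowCone k δ := by
  simp only [negPowCone, posPowCone, mem_ofPred_eq, mul_pow, hζ, neg_one_mul, neg_re,
    norm_neg] at hz ⊢
  linarith

lemma pow_ne_ofReal_and_norm_div_lt_of_mem_negPowCone {k : ℕ} {r ρ e : ℝ} {z : ℂ}
    (hk : k ≠ 0) (hρ : 0 ≤ ρ) (hρr : ρ < r) (he : 0 < e) (hzρ : ‖z‖ ≤ ρ)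
    (hz : z ∈ negPowCone k ((ρ / r) ^ k)) :
    z ^ k ≠ e ∧ ‖z ^ k / (z ^ k - e)‖ < r ^ k / (r ^ k + e) := by
  have hr : 0 < r := hρ.trans_lt hρr
  have hzk : ‖z ^ k‖ ≤ ρ ^ k := by
    rw [norm_pow]; exact pow_le_pow_left₀ (norm_nonneg z) hzρ k
  refine Complex.norm_div_sub_ofReal_lt he (hzk.trans_lt (pow_lt_pow_left₀ hρr hρ hk)) ?_
  have hδ : r ^ k * (ρ / r) ^ k = ρ ^ k := by rw [div_pow]; field_simp
  calc r ^ k * (z ^ k).re ≤ r ^ k * -((ρ / r) ^ k * ‖z ^ k‖) :=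
        mul_le_mul_of_nonneg_left hz (by positivity)
    _ = -(ρ ^ k * ‖z ^ k‖) := by rw [← hδ]; ring
    _ ≤ -‖z ^ k‖ ^ 2 := by
        rw [sq]; exact neg_le_neg (mul_le_mul_of_nonneg_right hzk (norm_nonneg _))

lemma volume_le_two_mul_volume_inter_negPowCone {U K : Set ℂ} {ζ : ℂ} {k : ℕ} (δ : ℝ)
    (hU : MeasurableSet U) (hK : MeasurableSet K) (hζ : ‖ζ‖ = 1) (hζk : ζ ^ k = -1)
    (hζK : ∀ z ∈ K, ζ * z ∈ U) :
    volume K ≤ 2 * volume (K ∩ negPowCone k δ) + volume (U \ K) +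
      volume (K ∩ imPowCone k δ) := by
  have hpos : volume (K ∩ posPowCone k δ) ≤ volume (K ∩ negPowCone k δ) + volume (U \ K) := by
    calc volume (K ∩ posPowCone k δ)
        ≤ volume ((ζ * ·) ⁻¹' (K ∩ negPowCone k δ ∪ U \ K)) := by
          refine measure_mono fun z ⟨hzK, hz⟩ ↦ ?_
          by_cases h : ζ * z ∈ K
          · exact Or.inl ⟨h, mul_mem_negPowCone hζk hz⟩
          · exact Or.inr ⟨hζK z hzK, h⟩
      _ = volume (K ∩ negPowCone k δ ∪ U \ K) :=
          (measurePreserving_mul_left_of_norm_eq_one hζ).measure_preimage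
            ((hK.inter (measurableSet_negPowCone k δ)).union (hU.diff hK)).nullMeasurableSet
      _ ≤ _ := measure_union_le _ _
  have hcover : K ⊆ K ∩ negPowCone k δ ∪ K ∩ posPowCone k δ ∪ K ∩ imPowCone k δ := by
    rw [← inter_union_distrib_left, ← inter_union_distrib_left,
      negPowCone_union_posPowCone_union_imPowCone, inter_univ]
  calc volume K
      ≤ volume (K ∩ negPowCone k δ) + volume (K ∩ posPowCone k δ) +
          volume (K ∩ imPowCone k δ) :=
        (measure_mono hcover).trans <|
          (measure_union_le _ _).trans (add_le_add_left (measure_union_le _ _) _)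
    _ ≤ volume (K ∩ negPowCone k δ) + (volume (K ∩ negPowCone k δ) + volume (U \ K)) +
          volume (K ∩ imPowCone k δ) := by gcongr
    _ = _ := by ring

lemma natCast_mul_volume_inter_imPowCone_le {K : Set ℂ} {r δ : ℝ} {k M : ℕ}
    (hK : MeasurableSet K) (hKr : K ⊆ ball 0 r) (hk : k ≠ 0) (hδM : 4 * δ * M < 1) :
    M * volume (K ∩ imPowCone k δ) ≤ volume (ball (0 : ℂ) r) := by
  rcases Nat.eq_zero_or_pos M with rfl | hM
  · simp
  -- The `k`-th powers of the rotations by `c ^ j`, `j < M`, are rotations by `jπ/(2M) ∈ [0, π/2)`,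
  -- and by Jordan's inequality any two of these angles differ by an angle of sine `≥ 1/M`.
  set c : ℂ := exp (↑(Real.pi / (2 * k * M)) * I)
  have hc : ∀ j : ℕ, ‖c ^ j‖ = 1 := fun j ↦ by rw [norm_pow, norm_exp_ofReal_mul_I, one_pow]
  have hck : ∀ m : ℕ, (c ^ m) ^ k = exp (↑(m * Real.pi / (2 * M)) * I) := fun m ↦ by
    rw [← pow_mul, ← Complex.exp_nat_mul]
    congr 1
    push_cast
    field_simp
  have hδ : δ ≤ 1 / 2 := by
    have : (1 : ℝ) ≤ M := by exact_mod_cast hM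
    nlinarith
  have hdisj : ∀ i j : Fin M, i < j →
      Disjoint ((c ^ (i : ℕ) * ·) ⁻¹' (K ∩ imPowCone k δ))
        ((c ^ (j : ℕ) * ·) ⁻¹' (K ∩ imPowCone k δ)) := by
    intro i j hij
    refine disjoint_left.2 fun z ⟨_, hi⟩ ⟨_, hj⟩ ↦ ?_
    set m := (j : ℕ) - i
    have hj_eq : (c ^ (j : ℕ) * z) ^ k =
        exp (↑(m * Real.pi / (2 * M)) * I) * (c ^ (i : ℕ) * z) ^ k := by
      rw [← hck m, ← mul_pow, ← mul_assoc, ← pow_add, Nat.sub_add_cancel hij.le]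
    simp only [imPowCone, mem_ofPred_eq, hj_eq] at hj
    have him := Complex.abs_im_lt_of_abs_re_lt (norm_exp_ofReal_mul_I _) hδ hi hj
    rw [exp_ofReal_mul_I_im] at him
    have hm : (1 : ℝ) ≤ m := by exact_mod_cast Nat.sub_pos_of_lt hij
    have hmM : (m : ℝ) ≤ M := by exact_mod_cast (Nat.sub_le _ _).trans j.2.le
    have hMpos : (0 : ℝ) < M := by exact_mod_cast hM
    have hsin := Real.mul_le_sin (x := m * Real.pi / (2 * M)) (by positivity)
      (by rw [div_le_div_iff₀ (by positivity) two_pos]; nlinarith [Real.pi_pos])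
    have : 2 / Real.pi * (m * Real.pi / (2 * M)) = m / M := by field_simp
    rw [this, div_le_iff₀ hMpos] at hsin
    nlinarith [le_abs_self (Real.sin (m * Real.pi / (2 * M)))]
  simpa using card_mul_measure_le_of_pairwise_disjoint
    (fun j : Fin M ↦ measurePreserving_mul_left_of_norm_eq_one (hc j))
    (hK.inter (measurableSet_imPowCone k δ))
    ((pairwise_disjoint_on _).2 hdisj)
    fun j z hz ↦ mem_ball_zero_iff.2 (by simpa [hc] using mem_ball_zero_iff.1 (hKr hz.1))

lemma IsCompact.eventually_forall_mul_mem {M : Type*} [TopologicalSpace M] [MulOneClass M]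
    [ContinuousMul M] {K U : Set M} (hK : IsCompact K) (hU : IsOpen U) (hKU : K ⊆ U) :
    ∀ᶠ u in 𝓝 (1 : M), ∀ z ∈ K, u * z ∈ U :=
  hK.eventually_forall_of_forall_eventually fun z hz ↦
    (continuous_mul.tendsto (1, z)).eventually (hU.mem_nhds (by simpa using hKU hz))

lemma tendsto_exp_pi_div_mul_I {q : ℕ → ℕ} (hq : Tendsto q atTop atTop) :
    Tendsto (fun n ↦ exp (↑(Real.pi / q n) * I)) atTop (𝓝 1) := by
  have h : Tendsto (fun n ↦ Real.pi / (q n : ℝ)) atTop (𝓝 0) :=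
    tendsto_const_nhds.div_atTop (tendsto_natCast_atTop_atTop.comp hq)
  simpa [Function.comp_def] using
    ((by fun_prop : Continuous fun x : ℝ ↦ exp (↑x * I)).tendsto 0).comp h

lemma exists_eventually_volume_le_two_mul_volume_inter_negPowCone {U : Set ℂ} {r : ℝ}
    {q : ℕ → ℕ} (hr : 0 < r) (hU : IsOpen U) (hUr : U ⊆ ball 0 r) (hq : Tendsto q atTop atTop)
    {ε : ℝ≥0∞} (hε : ε ≠ 0) :
    ∃ K ⊆ U, ∃ ρ, 0 ≤ ρ ∧ ρ < r ∧ K ⊆ ball 0 ρ ∧ ∀ᶠ n in atTop, q n ≠ 0 ∧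
      volume U ≤ 2 * volume (K ∩ negPowCone (q n) ((ρ / r) ^ q n)) + ε := by
  have hε3 : ε / 3 ≠ 0 := ENNReal.div_ne_zero.2 ⟨hε, ENNReal.ofNat_ne_top⟩
  obtain ⟨K, hKU, hKc, hUK⟩ := hU.measurableSet.exists_isCompact_sdiff_lt
    ((measure_mono hUr).trans_lt measure_ball_lt_top).ne (μ := volume) hε3
  obtain ⟨ρ, ⟨hρ0, hρr⟩, hKρ⟩ := exists_pos_lt_subset_ball hr hKc.isClosed (hKU.trans hUr)
  obtain ⟨M, hM⟩ := ENNReal.exists_nat_mul_gt hε3 (measure_ball_lt_top (μ := volume)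
    (x := (0 : ℂ)) (r := r)).ne
  have hδ : ∀ᶠ n in atTop, 4 * (ρ / r) ^ q n * M < 1 := by
    have : Tendsto (fun n ↦ 4 * (ρ / r) ^ q n * M) atTop (𝓝 0) := by
      simpa using (((tendsto_pow_atTop_nhds_zero_of_lt_one (by positivity)
        ((div_lt_one hr).2 hρr)).comp hq).const_mul 4).mul_const (M : ℝ)
    exact this.eventually_lt_const one_pos
  have hrot : ∀ᶠ n in atTop, ∀ z ∈ K, exp (↑(Real.pi / q n) * I) * z ∈ U :=
    tendsto_exp_pi_div_mul_I hq |>.eventually (hKc.eventually_forall_mul_mem hU hKU)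
  refine ⟨K, hKU, ρ, hρ0.le, hρr, hKρ, ?_⟩
  filter_upwards [hδ, hrot, hq.eventually_ne_atTop 0] with n hδn hrotn hqn
  refine ⟨hqn, ?_⟩
  set k := q n
  set δ := (ρ / r) ^ k
  have hE : volume (K ∩ imPowCone k δ) ≤ ε / 3 := by
    have hlt := (natCast_mul_volume_inter_imPowCone_le hKc.measurableSet (hKU.trans hUr) hqn
      hδn).trans_lt hM
    have hM0 : (M : ℝ≥0∞) ≠ 0 := by rintro h; simp [h] at hlt
    exact ((ENNReal.mul_lt_mul_iff_right hM0 (ENNReal.natCast_ne_top M)).1 hlt).le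
  calc volume U ≤ volume K + volume (U \ K) := by
        simpa [inter_eq_right.2 hKU] using measure_le_inter_add_sdiff volume U K
    _ ≤ 2 * volume (K ∩ negPowCone k δ) + volume (U \ K) + volume (K ∩ imPowCone k δ) +
          volume (U \ K) := by
        gcongr
        exact volume_le_two_mul_volume_inter_negPowCone δ hU.measurableSet hKc.measurableSet
          (norm_exp_ofReal_mul_I _) (exp_pi_div_mul_I_pow hqn) hrotn
    _ ≤ 2 * volume (K ∩ negPowCone k δ) + ε / 3 + ε / 3 + ε / 3 := by gcongr
    _ = 2 * volume (K ∩ negPowCone k δ) + ε := by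
        rw [add_assoc, add_assoc, ← add_assoc (ε / 3), ENNReal.add_thirds]

lemma dens_le_one (U X : Set ℂ) : dens U X ≤ 1 := by
  rcases eq_or_ne (volume U) ⊤ with h | h
  · simp [dens, h]
  · exact div_le_one_of_le₀ (ENNReal.toReal_mono h (measure_mono inter_subset_left))
      ENNReal.toReal_nonneg

lemma half_le_liminf_dens {U : Set ℂ} {X : ℕ → Set ℂ} (hU0 : volume U ≠ 0) (hU : volume U ≠ ⊤)
    (h : ∀ ε : ℝ≥0∞, ε ≠ 0 → ∀ᶠ n in atTop, volume U ≤ 2 * volume (U ∩ X n) + ε) :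
    1 / 2 ≤ liminf (fun n ↦ dens U (X n)) atTop := by
  have hbdd : IsCoboundedUnder (· ≥ ·) atTop fun n ↦ dens U (X n) :=
    (isBoundedUnder_of ⟨1, fun n ↦ dens_le_one U (X n)⟩).isCoboundedUnder_ge
  have hV : 0 < (volume U).toReal := ENNReal.toReal_pos hU0 hU
  refine le_of_forall_pos_le_add fun η hη ↦ ?_
  suffices 1 / 2 - η ≤ liminf (fun n ↦ dens U (X n)) atTop by linarith
  refine le_liminf_of_le hbdd ?_
  filter_upwards [h (ENNReal.ofReal (2 * η * (volume U).toReal))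
    (ENNReal.ofReal_pos.2 (by positivity)).ne'] with n hn
  have hUX : volume (U ∩ X n) ≠ ⊤ := ne_top_of_le_ne_top hU (measure_mono inter_subset_left)
  have hreal := ENNReal.toReal_mono (by finiteness) hn
  rw [ENNReal.toReal_add (by finiteness) ENNReal.ofReal_ne_top, ENNReal.toReal_mul,
    ENNReal.toReal_ofReal (by positivity)] at hreal
  rw [dens, le_div_iff₀ hV]
  norm_num at hreal
  nlinarith

theorem statement7_general (r7 r8 : ℝ)
    (q : ℕ → ℕ) (hqtop : Tendsto q atTop atTop)
    (ε : ℕ → ℝ) (hε : ∀ n, 0 < ε n)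
    (U : Set ℂ) (hUopen : IsOpen U) (hUne : U.Nonempty)
    (hUsub : U ⊆ {z : ℂ | r7 < ‖z‖ ∧ ‖z‖ < r8}) :
    (1 : ℝ) / 2 ≤ Filter.liminf
      (fun n => dens U
        ({z : ℂ | z ^ q n ≠ (ε n : ℂ) ∧
            ‖z ^ q n / (z ^ q n - (ε n : ℂ))‖ < r8 ^ q n / (r8 ^ q n + ε n)} \
          {z : ℂ | ‖z‖ ≤ r7}))
      Filter.atTop := by
  obtain ⟨z₀, hz₀⟩ := hUne
  have hr8 : 0 < r8 := (norm_nonneg z₀).trans_lt (hUsub hz₀).2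
  have hUball : U ⊆ ball 0 r8 := fun z hz ↦ mem_ball_zero_iff.2 (hUsub hz).2
  refine half_le_liminf_dens (hUopen.measure_ne_zero volume ⟨z₀, hz₀⟩)
    ((measure_mono hUball).trans_lt measure_ball_lt_top).ne fun η hη ↦ ?_
  obtain ⟨K, hKU, ρ, hρ0, hρr, hKρ, hev⟩ :=
    exists_eventually_volume_le_two_mul_volume_inter_negPowCone hr8 hUopen hUball hqtop hη
  filter_upwards [hev] with n ⟨hqn, hn⟩
  refine hn.trans ?_
  gcongr 2 * ?_ + _
  refine measure_mono fun z ⟨hzK, hz⟩ ↦ ?_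
  exact ⟨hKU hzK, pow_ne_ofReal_and_norm_div_lt_of_mem_negPowCone hqn hρ0 hρr (hε n)
    (mem_ball_zero_iff.1 (hKρ hzK)).le hz, not_le.2 (hUsub (hKU hzK)).1⟩

/-- Let `0 < r_7 < r_8`, `(q_n)` positive integers with `q_n → ∞`, `(ε_n)`
arbitrary positive reals, `s_n = r_8^{q_n}/(r_8^{q_n}+ε_n)`,
`X_n = {z : z^{q_n} ≠ ε_n, |z^{q_n}/(z^{q_n}−ε_n)| < s_n}` and `Y_n = X_n ∖ {|z| ≤ r_7}`.
Then for every nonempty open `U ⊆ H(r_7, r_8)`, `liminf dens_U(Y_n) ≥ 1/2`. -/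
theorem statement7 (r7 r8 : ℝ) (h7 : 0 < r7) (h78 : r7 < r8)
    (q : ℕ → ℕ) (hq : ∀ n, 0 < q n) (hqtop : Tendsto q atTop atTop)
    (ε : ℕ → ℝ) (hε : ∀ n, 0 < ε n)
    (U : Set ℂ) (hUopen : IsOpen U) (hUne : U.Nonempty)
    (hUsub : U ⊆ {z : ℂ | r7 < ‖z‖ ∧ ‖z‖ < r8}) :
    (1 : ℝ) / 2 ≤ Filter.liminf
      (fun n => dens U
        ({z : ℂ | z ^ q n ≠ (ε n : ℂ) ∧
            ‖z ^ q n / (z ^ q n - (ε n : ℂ))‖ < r8 ^ q n / (r8 ^ q n + ε n)} \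
          {z : ℂ | ‖z‖ ≤ r7}))
      Filter.atTop :=
  statement7_general r7 r8 q hqtop ε hε U hUopen hUne hUsub
end
end

section
/- Let 0 < r_5 < r_7 < r_8 < r_6 < 1 be reals, let (q_n) be positive integers with q_n → ∞, and let (ε_n) be positive reals with limsup_{n→∞} ε_n^{1/q_n} < r_5. Set s_n := r_8^{q_n}/(r_8^{q_n}+ε_n). Then for all sufficiently large n the following holds: for every z ∈ ℂ with |z| > r_7, z^{q_n} ≠ ε_n and |z^{q_n}/(z^{q_n}−ε_n)| < s_n, there exists W ∈ ℂ with |Re W| < 1/(2πq_n²r_5^{q_n}), Im W > 1/(2πq_n²r_6^{q_n}), and z^{q_n} = ε_n/(1 − e^{−2πi q_n² ε_n W}). -/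
/-!
With `t = z ^ q` and `u = t / (t - ε)`, the required identity says that `2πi q²ε W` is a
logarithm of `u`; take the principal one, so that `Re W` and `Im W` are `arg u` and `-log ‖u‖`
divided by `2π q² ε`. Eventually `ε < r₅ ^ q` and `3 r₅ ^ q < r₇ ^ q < ‖t‖`, so `u` is close to `1`
and `|arg u| ≤ ‖log u‖ ≤ (3/2) ‖u - 1‖ < ε / r₅ ^ q`. On the other side
`‖u‖ < r₈ ^ q / (r₈ ^ q + ε)` gives `-log ‖u‖ > ε / (r₈ ^ q + ε) > ε / r₆ ^ q`, because eventually
`r₈ ^ q + ε < 2 r₈ ^ q < r₆ ^ q`.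
-/

open Filter Complex
open scoped Real

theorem eventually_lt_pow_of_limsup_rpow_lt {q : ℕ → ℕ} {ε : ℕ → ℝ} {r : ℝ}
    (hq : ∀ᶠ n in atTop, 0 < q n) (hε : ∀ n, 0 ≤ ε n) (hr : 0 < r)
    (h : limsup (fun n => ENNReal.ofReal (ε n ^ (1 / (q n : ℝ)))) atTop < ENNReal.ofReal r) :
    ∀ᶠ n in atTop, ε n < r ^ q n := by
  filter_upwards [eventually_lt_of_limsup_lt h, hq] with n hn hqn
  rw [ENNReal.ofReal_lt_ofReal_iff hr, one_div,
    Real.rpow_inv_lt_iff_of_pos (hε n) hr.le (by exact_mod_cast hqn), Real.rpow_natCast] at hn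
  exact hn

theorem eventually_mul_pow_lt_pow {q : ℕ → ℕ} (hq : Tendsto q atTop atTop) {a b : ℝ}
    (ha : 0 ≤ a) (hab : a < b) (C : ℝ) : ∀ᶠ n in atTop, C * a ^ q n < b ^ q n := by
  have hb : 0 < b := ha.trans_lt hab
  have hlim : Tendsto (fun n => C * (a / b) ^ q n) atTop (nhds 0) := by
    simpa using ((tendsto_pow_atTop_nhds_zero_of_lt_one (by positivity)
      ((div_lt_one hb).mpr hab)).comp hq).const_mul C
  filter_upwards [hlim.eventually (gt_mem_nhds one_pos)] with n hn
  have hbn : 0 < b ^ q n := pow_pos hb _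
  calc C * a ^ q n = C * (a / b) ^ q n * b ^ q n := by
        rw [div_pow, mul_assoc, div_mul_cancel₀ _ hbn.ne']
    _ < 1 * b ^ q n := mul_lt_mul_of_pos_right hn hbn
    _ = b ^ q n := one_mul _

theorem Complex.norm_log_div_sub_lt {t : ℂ} {ε a : ℝ} (hε : 0 < ε) (hεa : ε < a)
    (ht : 3 * a < ‖t‖) : ‖log (t / (t - ε))‖ < ε / a := by
  have ha : 0 < a := hε.trans hεa
  have hsub : 2 * a < ‖t - ε‖ := by
    have := norm_sub_norm_le t ε
    rw [norm_real, Real.norm_of_nonneg hε.le] at this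
    linarith
  have hsub0 : t - ε ≠ 0 := norm_pos_iff.mp (by linarith)
  have hsmall : ‖(ε : ℂ) / (t - ε)‖ < ε / (2 * a) := by
    rw [norm_div, norm_real, Real.norm_of_nonneg hε.le]
    exact div_lt_div_of_pos_left hε (by positivity) hsub
  have hu : t / (t - ε) = 1 + ε / (t - ε) := by field_simp; ring
  calc ‖log (t / (t - ε))‖ ≤ 3 / 2 * ‖(ε : ℂ) / (t - ε)‖ := by
        rw [hu]
        refine norm_log_one_add_half_le_self (hsmall.le.trans ?_)
        rw [div_le_iff₀ (by positivity)]; linarith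
    _ < 3 / 2 * (ε / (2 * a)) := by gcongr
    _ < ε / a := by field_simp; linarith

theorem div_lt_neg_log_of_lt_div_add {x b ε c : ℝ} (hx : 0 < x) (hb : 0 < b) (hε : 0 < ε)
    (hc : b + ε ≤ c) (hxb : x < b / (b + ε)) : ε / c < -Real.log x := by
  have hy : 0 < b / (b + ε) := by positivity
  calc ε / c ≤ ε / (b + ε) := div_le_div_of_nonneg_left hε.le (by positivity) hc
    _ = 1 - (b / (b + ε))⁻¹⁻¹ := by field_simp; ring
    _ ≤ Real.log (b / (b + ε))⁻¹ := Real.one_sub_inv_le_log_of_pos (inv_pos.mpr hy)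
    _ = -Real.log (b / (b + ε)) := Real.log_inv _
    _ < -Real.log x := neg_lt_neg (Real.log_lt_log hx hxb)

theorem Complex.div_one_sub_exp_neg_log_div_sub {t ε : ℂ} (ht : t ≠ 0) (hε : ε ≠ 0)
    (htε : t ≠ ε) : ε / (1 - exp (-log (t / (t - ε)))) = t := by
  have hsub : t - ε ≠ 0 := sub_ne_zero.mpr htε
  rw [exp_neg, exp_log (div_ne_zero ht hsub), inv_div, one_sub_div ht, sub_sub_cancel,
    div_div_cancel₀ hε]

theorem Complex.two_pi_I_mul_mk_eq (L : ℂ) {a : ℝ} (ha : a ≠ 0) :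
    2 * π * I * a * ⟨L.im / (2 * π * a), -L.re / (2 * π * a)⟩ = L := by
  apply Complex.ext <;> simp <;> field_simp

theorem abs_div_mul_lt_one_div_mul {x c ε a : ℝ} (hc : 0 < c) (hε : 0 < ε) (ha : 0 < a)
    (hx : |x| < ε / a) : |x / (c * ε)| < 1 / (c * a) := by
  rw [abs_div, abs_of_pos (mul_pos hc hε), div_lt_div_iff₀ (by positivity) (by positivity)]
  have := (lt_div_iff₀ ha).mp hx
  nlinarith

theorem one_div_mul_lt_div_mul {x c ε a : ℝ} (hc : 0 < c) (hε : 0 < ε) (ha : 0 < a)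
    (hx : ε / a < x) : 1 / (c * a) < x / (c * ε) := by
  rw [div_lt_div_iff₀ (by positivity) (by positivity)]
  have := (div_lt_iff₀ ha).mp hx
  nlinarith

theorem statement8_general (r5 r7 r8 r6 : ℝ)
    (h5 : 0 < r5) (h57 : r5 < r7) (h78 : r7 < r8) (h86 : r8 < r6)
    (q : ℕ → ℕ) (hqtop : Tendsto q atTop atTop)
    (ε : ℕ → ℝ) (hε : ∀ n, 0 < ε n)
    (hlimsup : Filter.limsup
      (fun n => ENNReal.ofReal ((ε n) ^ (1 / (q n : ℝ)))) Filter.atTop < ENNReal.ofReal r5) :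
    ∀ᶠ n in atTop, ∀ z : ℂ, r7 < ‖z‖ → z ^ q n ≠ (ε n : ℂ) →
      ‖z ^ q n / (z ^ q n - (ε n : ℂ))‖ < r8 ^ q n / (r8 ^ q n + ε n) →
      ∃ W : ℂ,
        |W.re| < 1 / (2 * Real.pi * (q n : ℝ) ^ 2 * r5 ^ q n) ∧
        1 / (2 * Real.pi * (q n : ℝ) ^ 2 * r6 ^ q n) < W.im ∧
        z ^ q n = (ε n : ℂ) /
          (1 - Complex.exp (-(2 * Real.pi * Complex.I * ((q n : ℝ) ^ 2 * ε n : ℝ) * W))) := by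
  have h7 : 0 < r7 := h5.trans h57
  have h8 : 0 < r8 := h7.trans h78
  have h6 : 0 < r6 := h8.trans h86
  filter_upwards [eventually_lt_pow_of_limsup_rpow_lt (hqtop.eventually_gt_atTop 0)
      (fun n => (hε n).le) h5 hlimsup, hqtop.eventually_gt_atTop 0,
    eventually_mul_pow_lt_pow hqtop h5.le h57 3, eventually_mul_pow_lt_pow hqtop h8.le h86 2]
    with n hεn hqn h57n h86n z hz hne hlt
  set k := q n
  set t := z ^ k
  have hpos : (0 : ℝ) < 2 * π * (k : ℝ) ^ 2 := by positivity
  have hε_ne : ((ε n : ℝ) : ℂ) ≠ 0 := ofReal_ne_zero.mpr (hε n).ne'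
  have ht : r7 ^ k < ‖t‖ := by rw [norm_pow]; exact pow_lt_pow_left₀ hz h7.le hqn.ne'
  have ht0 : t ≠ 0 := norm_pos_iff.mp ((pow_pos h7 k).trans ht)
  set L := log (t / (t - ε n))
  have hre : |L.im| < ε n / r5 ^ k :=
    (abs_im_le_norm L).trans_lt (norm_log_div_sub_lt (hε n) hεn (by linarith))
  have him : ε n / r6 ^ k < -L.re := log_re _ ▸
    div_lt_neg_log_of_lt_div_add (norm_pos_iff.mpr (div_ne_zero ht0 (sub_ne_zero.mpr hne)))
      (pow_pos h8 k) (hε n)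
      (by linarith [pow_le_pow_left₀ h5.le (h57.trans h78).le k]) hlt
  have hassoc : 2 * π * ((k : ℝ) ^ 2 * ε n) = 2 * π * k ^ 2 * ε n := (mul_assoc _ _ _).symm
  refine ⟨⟨L.im / (2 * π * (k ^ 2 * ε n)), -L.re / (2 * π * (k ^ 2 * ε n))⟩, ?_, ?_, ?_⟩
  · rw [hassoc]; exact abs_div_mul_lt_one_div_mul hpos (hε n) (pow_pos h5 k) hre
  · rw [hassoc]; exact one_div_mul_lt_div_mul hpos (hε n) (pow_pos h6 k) him
  · rw [two_pi_I_mul_mk_eq L (mul_pos (by positivity) (hε n)).ne',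
      div_one_sub_exp_neg_log_div_sub ht0 hε_ne hne]

/-- Let `0 < r_5 < r_7 < r_8 < r_6 < 1`, `(q_n)` positive integers with
`q_n → ∞`, and `(ε_n)` positive reals with `limsup ε_n^{1/q_n} < r_5`. Then for all
sufficiently large `n`: every `z` with `|z| > r_7`, `z^{q_n} ≠ ε_n` and
`|z^{q_n}/(z^{q_n}−ε_n)| < s_n` satisfies `z^{q_n} = ε_n/(1−e^{−2πi q_n² ε_n W})` for some
`W` with `|Re W| < 1/(2πq_n²r_5^{q_n})` and `Im W > 1/(2πq_n²r_6^{q_n})`. -/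
theorem statement8 (r5 r7 r8 r6 : ℝ)
    (h5 : 0 < r5) (h57 : r5 < r7) (h78 : r7 < r8) (h86 : r8 < r6) (h61 : r6 < 1)
    (q : ℕ → ℕ) (hq : ∀ n, 0 < q n) (hqtop : Tendsto q atTop atTop)
    (ε : ℕ → ℝ) (hε : ∀ n, 0 < ε n)
    (hlimsup : Filter.limsup
      (fun n => ENNReal.ofReal ((ε n) ^ (1 / (q n : ℝ)))) Filter.atTop < ENNReal.ofReal r5) :
    ∀ᶠ n in atTop, ∀ z : ℂ, r7 < ‖z‖ → z ^ q n ≠ (ε n : ℂ) →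
      ‖z ^ q n / (z ^ q n - (ε n : ℂ))‖ < r8 ^ q n / (r8 ^ q n + ε n) →
      ∃ W : ℂ,
        |W.re| < 1 / (2 * Real.pi * (q n : ℝ) ^ 2 * r5 ^ q n) ∧
        1 / (2 * Real.pi * (q n : ℝ) ^ 2 * r6 ^ q n) < W.im ∧
        z ^ q n = (ε n : ℂ) /
          (1 - Complex.exp (-(2 * Real.pi * Complex.I * ((q n : ℝ) ^ 2 * ε n : ℝ) * W))) :=
  statement8_general r5 r7 r8 r6 h5 h57 h78 h86 q hqtop ε hε hlimsup
end

section
/- Let 0 < ε < R be reals. Then for every z ∈ ℂ with |z| ≥ R (so in particular z ≠ ε), the number w := z/(z−ε) satisfies (Re w − R²/(R²−ε²))² + (Im w)² ≤ (εR/(R²−ε²))²; consequently |w| ≥ R/(R+ε) and |Arg w| ≤ arcsin(ε/R), where Arg denotes the principal argument. -/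
/-!
The Möbius map `z ↦ z/(z-ε)` sends the exterior of the circle `|z| = R` onto a closed disk. The
identity `|R² - εz|² + (R² - ε²)(|z|² - R²) = R²|z - ε|²` gives `|R² - εz| ≤ R|z - ε|` for
`|z| ≥ R`, which is exactly the disk inequality after clearing denominators. The disk of center
`c = R²/(R²-ε²)` and radius `r = εR/(R²-ε²)` lies to the right of `c - r = R/(R+ε)` and inside the
sector seen from `0` under the half-angle `arcsin (r/c) = arcsin (ε/R)`.
-/

namespace Complex

lemma normSq_sq_sub_mul_add (R ε : ℝ) (z : ℂ) :
    normSq ((R : ℂ) ^ 2 - ε * z) + (R ^ 2 - ε ^ 2) * (normSq z - R ^ 2) =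
      R ^ 2 * normSq (z - ε) := by
  simp only [normSq_apply, ← ofReal_pow, sub_re, sub_im, mul_re, mul_im, ofReal_re, ofReal_im]
  ring

lemma ne_ofReal_of_abs_lt_of_le_norm {ε R : ℝ} (hεR : |ε| < R) {z : ℂ} (hz : R ≤ ‖z‖) :
    z ≠ ε := by
  rintro rfl
  rw [norm_real, Real.norm_eq_abs] at hz
  linarith

lemma norm_sq_sub_mul_le {R ε : ℝ} (hR : 0 ≤ R) (hεR : ε ^ 2 ≤ R ^ 2) {z : ℂ} (hz : R ≤ ‖z‖) :
    ‖(R : ℂ) ^ 2 - ε * z‖ ≤ R * ‖z - ε‖ := by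
  have hnormSq : R ^ 2 ≤ normSq z := by
    rw [← Complex.sq_norm]
    exact pow_le_pow_left₀ hR hz 2
  have key := normSq_sq_sub_mul_add R ε z
  rw [← pow_le_pow_iff_left₀ (norm_nonneg _) (by positivity) two_ne_zero, mul_pow, Complex.sq_norm,
    Complex.sq_norm]
  nlinarith [mul_nonneg (sub_nonneg.2 hεR) (sub_nonneg.2 hnormSq)]

lemma div_sub_div_sq_sub_sq_eq {R ε : ℝ} (hεR : R ^ 2 - ε ^ 2 ≠ 0) {z : ℂ} (hz : z ≠ ε) :
    z / (z - ε) - ((R ^ 2 / (R ^ 2 - ε ^ 2) : ℝ) : ℂ) =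
      ε * ((R : ℂ) ^ 2 - ε * z) / (((R ^ 2 - ε ^ 2 : ℝ) : ℂ) * (z - ε)) := by
  have hz' : z - ε ≠ 0 := sub_ne_zero.mpr hz
  have hεR' : ((R ^ 2 - ε ^ 2 : ℝ) : ℂ) ≠ 0 := ofReal_ne_zero.mpr hεR
  rw [ofReal_div]
  field_simp
  push_cast
  ring

lemma norm_div_sub_div_sq_sub_sq_le {R ε : ℝ} (hε : 0 < ε) (hεR : ε < R) {z : ℂ} (hz : R ≤ ‖z‖) :
    ‖z / (z - ε) - ((R ^ 2 / (R ^ 2 - ε ^ 2) : ℝ) : ℂ)‖ ≤ ε * R / (R ^ 2 - ε ^ 2) := by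
  have hR : 0 < R := hε.trans hεR
  have hden : 0 < R ^ 2 - ε ^ 2 := by nlinarith
  have hzε : z ≠ ε := ne_ofReal_of_abs_lt_of_le_norm (by rwa [abs_of_pos hε]) hz
  have hpos : 0 < ‖z - ε‖ := norm_pos_iff.mpr (sub_ne_zero.mpr hzε)
  rw [div_sub_div_sq_sub_sq_eq hden.ne' hzε, norm_div, norm_mul, norm_mul, norm_real, norm_real,
    Real.norm_of_nonneg hε.le, Real.norm_of_nonneg hden.le,
    div_le_div_iff₀ (mul_pos hden hpos) hden]
  have hbound := norm_sq_sub_mul_le (ε := ε) hR.le (by nlinarith) hz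
  calc ε * ‖(R : ℂ) ^ 2 - ε * z‖ * (R ^ 2 - ε ^ 2)
      ≤ ε * (R * ‖z - ε‖) * (R ^ 2 - ε ^ 2) := by gcongr
    _ = ε * R * ((R ^ 2 - ε ^ 2) * ‖z - ε‖) := by ring

lemma sq_re_sub_add_sq_im (w : ℂ) (c : ℝ) : (w.re - c) ^ 2 + w.im ^ 2 = ‖w - c‖ ^ 2 := by
  rw [Complex.sq_norm, normSq_apply, sub_re, sub_im, ofReal_re, ofReal_im, sub_zero]
  ring

lemma sub_le_norm_of_norm_sub_le {w : ℂ} {c r : ℝ} (hc : 0 ≤ c) (hw : ‖w - c‖ ≤ r) :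
    c - r ≤ ‖w‖ := by
  have := norm_sub_norm_le (c : ℂ) (c - w)
  rw [norm_real, Real.norm_of_nonneg hc, sub_sub_cancel, norm_sub_rev] at this
  linarith

lemma abs_im_div_norm_le_of_norm_sub_le {w : ℂ} {c r : ℝ} (hrc : r < c)
    (hw : ‖w - c‖ ≤ r) : |w.im / ‖w‖| ≤ r / c := by
  have hc : 0 < c := (norm_nonneg _).trans_lt (hw.trans_lt hrc)
  have hr : 0 ≤ r := (norm_nonneg _).trans hw
  have hw0 : 0 < ‖w‖ := by linarith [sub_le_norm_of_norm_sub_le hc.le hw]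
  have hdisk : (w.re - c) ^ 2 + w.im ^ 2 ≤ r ^ 2 := by
    rw [sq_re_sub_add_sq_im]
    exact pow_le_pow_left₀ (norm_nonneg _) hw 2
  -- `(c² - r²) im² ≤ (c² - r²)(r² - (re - c)²) = r² re² - (c re - (c² - r²))²`
  have hsq : (|w.im| * c) ^ 2 ≤ (r * ‖w‖) ^ 2 := by
    rw [mul_pow, mul_pow, sq_abs, Complex.sq_norm, normSq_apply]
    nlinarith [sq_nonneg (c * w.re - (c ^ 2 - r ^ 2)),
      mul_le_mul_of_nonneg_left hdisk (sub_nonneg.2 (pow_le_pow_left₀ hr hrc.le 2))]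
  rw [abs_div, abs_norm, div_le_div_iff₀ hw0 hc]
  exact (pow_le_pow_iff_left₀ (by positivity) (by positivity) two_ne_zero).mp hsq

lemma abs_arg_le_arcsin_of_norm_sub_le {w : ℂ} {c r : ℝ} (hrc : r < c) (hw : ‖w - c‖ ≤ r) :
    |arg w| ≤ Real.arcsin (r / c) := by
  have hc : 0 < c := (norm_nonneg _).trans_lt (hw.trans_lt hrc)
  have hre : 0 ≤ w.re := by
    have := abs_re_le_norm (w - c)
    rw [sub_re, ofReal_re, abs_le] at this
    linarith [this.1]
  rw [arg_of_re_nonneg hre, abs_le, ← Real.arcsin_neg]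
  obtain ⟨hlow, hupp⟩ := abs_le.mp (abs_im_div_norm_le_of_norm_sub_le hrc hw)
  exact ⟨Real.monotone_arcsin hlow, Real.monotone_arcsin hupp⟩

end Complex

/-- For `0 < ε < R` and `z ∈ ℂ` with `|z| ≥ R` (so in particular `z ≠ ε`),
the number `w = z/(z−ε)` lies in the closed disk of center `R²/(R²−ε²)` and radius
`εR/(R²−ε²)`; consequently `|w| ≥ R/(R+ε)` and `|Arg w| ≤ arcsin(ε/R)`. -/
theorem statement9 (ε R : ℝ) (hε : 0 < ε) (hεR : ε < R) (z : ℂ)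
    (hz : R ≤ ‖z‖) :
    z ≠ (ε : ℂ) ∧
    ((z / (z - (ε : ℂ))).re - R ^ 2 / (R ^ 2 - ε ^ 2)) ^ 2 + ((z / (z - (ε : ℂ))).im) ^ 2 ≤
      (ε * R / (R ^ 2 - ε ^ 2)) ^ 2 ∧
    R / (R + ε) ≤ ‖z / (z - (ε : ℂ))‖ ∧
    |Complex.arg (z / (z - (ε : ℂ)))| ≤ Real.arcsin (ε / R) := by
  have hR : 0 < R := hε.trans hεR
  have hden : 0 < R ^ 2 - ε ^ 2 := by nlinarith
  have hdisk := Complex.norm_div_sub_div_sq_sub_sq_le hε hεR hz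
  have hrc : ε * R / (R ^ 2 - ε ^ 2) < R ^ 2 / (R ^ 2 - ε ^ 2) := by gcongr; nlinarith
  have hcenter : R ^ 2 / (R ^ 2 - ε ^ 2) - ε * R / (R ^ 2 - ε ^ 2) = R / (R + ε) := by
    field_simp
    ring
  have hratio : ε * R / (R ^ 2 - ε ^ 2) / (R ^ 2 / (R ^ 2 - ε ^ 2)) = ε / R := by
    field_simp
  refine ⟨?_, ?_, ?_, ?_⟩
  · exact Complex.ne_ofReal_of_abs_lt_of_le_norm (by rwa [abs_of_pos hε]) hz
  · rw [Complex.sq_re_sub_add_sq_im]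
    exact pow_le_pow_left₀ (norm_nonneg _) hdisk 2
  · exact hcenter ▸ Complex.sub_le_norm_of_norm_sub_le (by positivity) hdisk
  · exact hratio ▸ Complex.abs_arg_le_arcsin_of_norm_sub_le hrc hdisk
end

section
/- Let A ∈ (1,+∞] and 1/A < r < r' < 1 (with 1/A := 0 if A = +∞). Let (q_n) be positive integers with q_n → ∞ and (ε_n) positive reals with ε_n^{1/q_n} → 1/A. Then there exist M > 0 and N such that for all n ≥ N and all Z ∈ Q_n(1/(2πq_n²r^{q_n})): the open ball B(Z, 1/(2πq_n²r'^{q_n})) is contained in Q_n, and |ε_n/(1 − e^{−2πiq_n²ε_nZ})| ≤ M·r^{q_n}. -/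
open Filter Set Metric

noncomputable section

/-- The domain `Q_n = ℍ⁺ ∪ ℍ⁻ ∪ (−1/(q²ε), 0)`. -/
def QnSet (q : ℕ) (ε : ℝ) : Set ℂ :=
  {Z : ℂ | 0 < Z.im} ∪ {Z : ℂ | Z.im < 0} ∪
    {Z : ℂ | Z.im = 0 ∧ Z.re ∈ Set.Ioo (-(1 / ((q : ℝ) ^ 2 * ε))) 0}

/-- The sector region `Q_n(a) = {Z : Re(Z − a + 1/(q²ε)) > −|Im(Z − a + 1/(q²ε))|` and
`Re(Z + a) < |Im(Z + a)|}`. -/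
def QnSector (q : ℕ) (ε a : ℝ) : Set ℂ :=
  {Z : ℂ |
    -|(Z - (a : ℂ) + ((1 / ((q : ℝ) ^ 2 * ε) : ℝ) : ℂ)).im| <
      (Z - (a : ℂ) + ((1 / ((q : ℝ) ^ 2 * ε) : ℝ) : ℂ)).re ∧
    (Z + (a : ℂ)).re < |(Z + (a : ℂ)).im|}

/-!
Multiplying by `c = q²ε` turns `Q_n(a)` into the sector `α - 1 - |Im w| < Re w < |Im w| - α`
with `α = ca = ε / (2π r^q)`, which keeps away from the zeros `0` and `-1` of `1 - e^{-2πiw}`: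
either `|Im w| ≥ α` and `|e^{2π Im w} - 1|` is already of size `α`, or `Re w` lies at distance
`≥ α - |Im w|` from `ℤ`, and the imaginary part of `1 - e^{-2πiw}` (its real part near the
half-integers) makes up the difference. Hence
`|1 - e^{-2πiw}| ≥ α` as soon as `4πα ≤ 1`, that is `2ε ≤ r^q`, which gives the bound with
`M = 2π`. The ball lies in `Q_n` once its radius is at most `a / 2`, that is `2r^q ≤ r'^q`.
For large `n` both hold, since `ε_n < r₁^{q_n}` for any `r₁ ∈ (1/A, r)` and `(r₁/r)^{q_n}`,
`(r/r')^{q_n}` tend to `0`.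
-/

lemma min_abs_le_two_mul_abs_exp_sub_one (x : ℝ) :
    min |x| (1 / 2) ≤ 2 * |Real.exp x - 1| := by
  rcases le_or_gt 0 x with hx | hx
  · have := Real.add_one_le_exp x
    rw [abs_of_nonneg (by linarith : 0 ≤ Real.exp x - 1)]
    linarith [min_le_left |x| (1 / 2), abs_of_nonneg hx]
  · set m := min |x| (1 / 2)
    have hm0 : 0 ≤ m := le_min (abs_nonneg x) (by norm_num)
    have hm1 : m ≤ 1 / 2 := min_le_right _ _
    have hmx : x ≤ -m := by linarith [min_le_left |x| (1 / 2), abs_of_neg hx]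
    have hquad : Real.exp (-m) ≤ 1 - m + m ^ 2 := by
      have := Real.abs_exp_sub_one_sub_id_le (x := -m) (by rw [abs_neg, abs_of_nonneg hm0]; linarith)
      linarith [le_abs_self (Real.exp (-m) - 1 - -m), neg_sq m]
    have := Real.exp_le_exp.2 hmx
    rw [abs_of_neg (by linarith [Real.exp_lt_one_iff.2 hx] : Real.exp x - 1 < 0)]
    nlinarith

lemma four_mul_le_sin_two_pi_mul {t : ℝ} (h₀ : 0 ≤ t) (h₁ : t ≤ 1 / 4) :
    4 * t ≤ Real.sin (2 * Real.pi * t) := by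
  have := Real.mul_le_sin (x := 2 * Real.pi * t) (by positivity) (by nlinarith [Real.pi_pos])
  have h4 : 2 / Real.pi * (2 * Real.pi * t) = 4 * t := by field_simp; ring
  rwa [h4] at this

section

open Complex

lemma abs_exp_re_sub_one_le_norm_one_sub_exp (z : ℂ) :
    |Real.exp z.re - 1| ≤ ‖1 - exp z‖ := by
  simpa [norm_exp, abs_sub_comm] using abs_norm_sub_norm_le (1 : ℂ) (exp z)

lemma exp_re_mul_abs_sin_im_le_norm_one_sub_exp (z : ℂ) :
    Real.exp z.re * |Real.sin z.im| ≤ ‖1 - exp z‖ := by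
  simpa [exp_im, abs_mul] using abs_im_le_norm (1 - exp z)

lemma one_le_norm_one_sub_exp_of_cos_im_nonpos {z : ℂ} (h : Real.cos z.im ≤ 0) :
    1 ≤ ‖1 - exp z‖ := by
  have hre : 1 ≤ (1 - exp z).re := by
    rw [sub_re, one_re, exp_re]
    nlinarith [Real.exp_pos z.re]
  exact hre.trans ((le_abs_self _).trans (abs_re_le_norm _))

lemma two_mul_le_norm_one_sub_exp {z : ℂ} {β t : ℝ} (hβ : 0 ≤ β) (hβ' : 2 * β ≤ 1)
    (hre : 1 / 2 ≤ Real.exp z.re) (him : z.im = 2 * Real.pi * t) (h₁ : β ≤ t) (h₂ : t ≤ 1 - β) :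
    2 * β ≤ ‖1 - exp z‖ := by
  have hsin := exp_re_mul_abs_sin_im_le_norm_one_sub_exp z
  rw [him] at hsin
  rcases le_or_gt t (1 / 4) with ht | ht
  · have := four_mul_le_sin_two_pi_mul (hβ.trans h₁) ht
    nlinarith [le_abs_self (Real.sin (2 * Real.pi * t))]
  rcases le_or_gt (3 / 4) t with ht' | ht'
  · have := four_mul_le_sin_two_pi_mul (t := 1 - t) (by linarith) (by linarith)
    rw [mul_one_sub (2 * Real.pi), Real.sin_two_pi_sub] at this
    nlinarith [neg_abs_le (Real.sin (2 * Real.pi * t))]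
  · have hcos : Real.cos z.im ≤ 0 :=
      Real.cos_nonpos_of_pi_div_two_le_of_le (by rw [him]; nlinarith [Real.pi_pos])
        (by rw [him]; nlinarith [Real.pi_pos])
    linarith [one_le_norm_one_sub_exp_of_cos_im_nonpos hcos]

lemma le_norm_one_sub_exp_neg_two_pi_I_mul {α : ℝ} {w : ℂ} (hα₀ : 0 ≤ α)
    (hα : 4 * Real.pi * α ≤ 1) (h₁ : α - 1 - |w.im| < w.re) (h₂ : w.re + α < |w.im|) :
    α ≤ ‖1 - exp (-(2 * Real.pi * I * w))‖ := by
  set z := -(2 * Real.pi * I * w)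
  have hzre : z.re = 2 * Real.pi * w.im := by simp [z]
  have hzim : z.im = 2 * Real.pi * -w.re := by simp [z]
  have hπ := Real.pi_gt_three
  have hmin := min_abs_le_two_mul_abs_exp_sub_one z.re
  have hexp := abs_exp_re_sub_one_le_norm_one_sub_exp z
  rw [hzre, abs_mul, abs_of_pos (by positivity : 0 < 2 * Real.pi)] at hmin
  rw [hzre] at hexp
  rcases le_or_gt α |w.im| with hv | hv
  · have : 2 * Real.pi * α ≤ min (2 * Real.pi * |w.im|) (1 / 2) :=
      le_min (by gcongr) (by linarith)
    nlinarith
  · rw [min_eq_left (by nlinarith)] at hmin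
    have hre : 1 / 2 ≤ Real.exp z.re := by
      rw [hzre]
      nlinarith [Real.add_one_le_exp (2 * Real.pi * w.im), neg_abs_le w.im]
    have := two_mul_le_norm_one_sub_exp (β := α - |w.im|) (by linarith) (by nlinarith) hre hzim
      (by linarith) (by linarith)
    nlinarith [abs_nonneg w.im]

lemma ball_subset_QnSet {q : ℕ} {ε a ρ : ℝ} {Z : ℂ} (hρ : 2 * ρ ≤ a)
    (hZ : Z ∈ QnSector q ε a) : ball Z ρ ⊆ QnSet q ε := by
  simp only [QnSector, mem_ofPred_eq, add_im, sub_im, ofReal_im,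
    add_re, sub_re, ofReal_re, sub_zero, add_zero] at hZ
  intro W hW
  rw [mem_ball, dist_eq] at hW
  rcases lt_trichotomy W.im 0 with hW0 | hW0 | hW0
  · exact Or.inl (Or.inr hW0)
  · have him : |Z.im| < ρ := by
      simpa [hW0] using (abs_im_le_norm (W - Z)).trans_lt hW
    have hre : |W.re - Z.re| < ρ := (abs_re_le_norm (W - Z)).trans_lt hW
    refine Or.inr ⟨hW0, ?_, ?_⟩
    · linarith [neg_abs_le (W.re - Z.re)]
    · linarith [le_abs_self (W.re - Z.re)]
  · exact Or.inl (Or.inl hW0)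

lemma lt_re_and_re_lt_of_mem_QnSector {q : ℕ} {ε a : ℝ} {Z : ℂ} (hc : 0 < (q : ℝ) ^ 2 * ε)
    (hZ : Z ∈ QnSector q ε a) :
    (q : ℝ) ^ 2 * ε * a - 1 - |(((q : ℝ) ^ 2 * ε : ℝ) * Z : ℂ).im| <
        (((q : ℝ) ^ 2 * ε : ℝ) * Z : ℂ).re ∧
      (((q : ℝ) ^ 2 * ε : ℝ) * Z : ℂ).re + (q : ℝ) ^ 2 * ε * a <
        |(((q : ℝ) ^ 2 * ε : ℝ) * Z : ℂ).im| := by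
  set c := (q : ℝ) ^ 2 * ε
  simp only [QnSector, mem_ofPred_eq, add_im, sub_im, ofReal_im,
    add_re, sub_re, ofReal_re, sub_zero, add_zero] at hZ
  rw [re_ofReal_mul, im_ofReal_mul, abs_mul, abs_of_pos hc]
  obtain ⟨h₁, h₂⟩ := hZ
  have h₁ := mul_lt_mul_of_pos_left h₁ hc
  have h₂ := mul_lt_mul_of_pos_left h₂ hc
  rw [mul_add, mul_sub, mul_one_div_cancel hc.ne'] at h₁
  constructor <;> linarith

lemma norm_div_one_sub_exp_le {q : ℕ} {ε r : ℝ} {Z : ℂ} (hq : q ≠ 0) (hε : 0 < ε) (hr : 0 < r)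
    (hεr : 2 * ε ≤ r ^ q)
    (hZ : Z ∈ QnSector q ε (1 / (2 * Real.pi * (q : ℝ) ^ 2 * r ^ q))) :
    ‖(ε : ℂ) / (1 - exp (-(2 * Real.pi * I * ((q : ℝ) ^ 2 * ε : ℝ) * Z)))‖ ≤
      2 * Real.pi * r ^ q := by
  have hc : 0 < (q : ℝ) ^ 2 * ε := by positivity
  have hα : (q : ℝ) ^ 2 * ε * (1 / (2 * Real.pi * (q : ℝ) ^ 2 * r ^ q)) =
      ε / (2 * Real.pi * r ^ q) := by
    field_simp
  obtain ⟨h₁, h₂⟩ := lt_re_and_re_lt_of_mem_QnSector hc hZ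
  rw [hα] at h₁ h₂
  have hαpos : 0 < ε / (2 * Real.pi * r ^ q) := by positivity
  have hα4 : 4 * Real.pi * (ε / (2 * Real.pi * r ^ q)) ≤ 1 := by
    rw [mul_div_assoc', div_le_one (by positivity)]
    nlinarith [Real.pi_pos]
  have hlow := le_norm_one_sub_exp_neg_two_pi_I_mul hαpos.le hα4 h₁ h₂
  rw [← mul_assoc] at hlow
  rw [norm_div, norm_real, Real.norm_of_nonneg hε.le, div_le_iff₀ (hαpos.trans_le hlow)]
  calc ε = 2 * Real.pi * r ^ q * (ε / (2 * Real.pi * r ^ q)) := by field_simp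
    _ ≤ _ := by gcongr

end

lemma eventually_two_mul_pow_le_pow {r r' : ℝ} (hr : 0 ≤ r) (hrr' : r < r') {q : ℕ → ℕ}
    (hq : Tendsto q atTop atTop) : ∀ᶠ n in atTop, 2 * r ^ q n ≤ r' ^ q n := by
  have hr' : 0 < r' := hr.trans_lt hrr'
  have hlim : Tendsto (fun k : ℕ => (r / r') ^ k) atTop (nhds 0) :=
    tendsto_pow_atTop_nhds_zero_of_lt_one (by positivity) ((div_lt_one hr').2 hrr')
  filter_upwards [hq.eventually (hlim.eventually_lt_const (by norm_num : (0 : ℝ) < 1 / 2))]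
    with n hn
  rw [div_pow, div_lt_iff₀ (by positivity)] at hn
  linarith

lemma eventually_lt_pow_of_tendsto_rpow {s r : ℝ} (hsr : s < r) {q : ℕ → ℕ}
    (hq : Tendsto q atTop atTop) {ε : ℕ → ℝ} (hε : ∀ n, 0 ≤ ε n)
    (hlim : Tendsto (fun n => ε n ^ (1 / (q n : ℝ))) atTop (nhds s)) :
    ∀ᶠ n in atTop, ε n < r ^ q n := by
  filter_upwards [hlim.eventually_lt_const hsr, hq.eventually_ne_atTop 0] with n hn hq0
  calc ε n = (ε n ^ (1 / (q n : ℝ))) ^ q n := by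
        rw [one_div, Real.rpow_inv_natCast_pow (hε n) hq0]
    _ < r ^ q n := pow_lt_pow_left₀ hn (Real.rpow_nonneg (hε n) _) hq0

lemma eventually_two_mul_le_pow {s r : ℝ} (hs : 0 ≤ s) (hsr : s < r) {q : ℕ → ℕ}
    (hq : Tendsto q atTop atTop) {ε : ℕ → ℝ} (hε : ∀ n, 0 ≤ ε n)
    (hlim : Tendsto (fun n => ε n ^ (1 / (q n : ℝ))) atTop (nhds s)) :
    ∀ᶠ n in atTop, 2 * ε n ≤ r ^ q n := by
  filter_upwards [eventually_lt_pow_of_tendsto_rpow (r := (s + r) / 2) (by linarith) hq hε hlim,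
    eventually_two_mul_pow_le_pow (r := (s + r) / 2) (r' := r) (by linarith) (by linarith) hq]
    with n hlt hle
  linarith

theorem statement15_general (invA r r' : ℝ) (h0 : 0 ≤ invA) (h1 : invA < r) (h2 : r < r')
    (q : ℕ → ℕ) (hqtop : Tendsto q atTop atTop)
    (ε : ℕ → ℝ) (hε : ∀ n, 0 < ε n)
    (hεlim : Tendsto (fun n => (ε n) ^ (1 / (q n : ℝ))) atTop (nhds invA)) :
    ∃ M : ℝ, 0 < M ∧ ∃ N : ℕ, ∀ n ≥ N,
      ∀ Z ∈ QnSector (q n) (ε n) (1 / (2 * Real.pi * (q n : ℝ) ^ 2 * r ^ q n)),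
        Metric.ball Z (1 / (2 * Real.pi * (q n : ℝ) ^ 2 * r' ^ q n)) ⊆ QnSet (q n) (ε n) ∧
        ‖(ε n : ℂ) /
            (1 - Complex.exp (-(2 * Real.pi * Complex.I * ((q n : ℝ) ^ 2 * ε n : ℝ) * Z)))‖ ≤
          M * r ^ q n := by
  have hr : 0 < r := h0.trans_lt h1
  have hr' : 0 < r' := hr.trans h2
  obtain ⟨N, hN⟩ := eventually_atTop.1 <| (hqtop.eventually_ne_atTop 0).and <|
    (eventually_two_mul_le_pow h0 h1 hqtop (fun n => (hε n).le) hεlim).and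
      (eventually_two_mul_pow_le_pow hr.le h2 hqtop)
  refine ⟨2 * Real.pi, by positivity, N, fun n hn Z hZ => ?_⟩
  obtain ⟨hq0, hεr, hrr'⟩ := hN n hn
  have hK : 0 < 2 * Real.pi * (q n : ℝ) ^ 2 := by
    have : 0 < (q n : ℝ) := Nat.cast_pos.2 (Nat.pos_of_ne_zero hq0)
    positivity
  have hρ : 2 * (1 / (2 * Real.pi * (q n : ℝ) ^ 2 * r' ^ q n)) ≤
      1 / (2 * Real.pi * (q n : ℝ) ^ 2 * r ^ q n) := by
    rw [mul_one_div, div_le_div_iff₀ (by positivity) (by positivity)]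
    linear_combination (2 * Real.pi * (q n : ℝ) ^ 2) * hrr'
  exact ⟨ball_subset_QnSet hρ hZ, norm_div_one_sub_exp_le hq0 (hε n) hr hεr hZ⟩

/-- Lemma 3.1(a). Let `A ∈ (1,+∞]` and `1/A < r < r' < 1`, let `(q_n)` be
positive integers with `q_n → ∞` and `(ε_n)` positive reals with `ε_n^{1/q_n} → 1/A`. Then
there exist `M > 0` and `N` such that for all `n ≥ N` and all `Z ∈ Q_n(1/(2πq_n²r^{q_n}))`:
`B(Z, 1/(2πq_n²r'^{q_n})) ⊆ Q_n` and `|ε_n/(1 − e^{−2πiq_n²ε_nZ})| ≤ M·r^{q_n}`. -/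
theorem statement15 (invA r r' : ℝ) (h0 : 0 ≤ invA) (h1 : invA < r) (h2 : r < r') (h3 : r' < 1)
    (q : ℕ → ℕ) (hq : ∀ n, 0 < q n) (hqtop : Tendsto q atTop atTop)
    (ε : ℕ → ℝ) (hε : ∀ n, 0 < ε n)
    (hεlim : Tendsto (fun n => (ε n) ^ (1 / (q n : ℝ))) atTop (nhds invA)) :
    ∃ M : ℝ, 0 < M ∧ ∃ N : ℕ, ∀ n ≥ N,
      ∀ Z ∈ QnSector (q n) (ε n) (1 / (2 * Real.pi * (q n : ℝ) ^ 2 * r ^ q n)),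
        Metric.ball Z (1 / (2 * Real.pi * (q n : ℝ) ^ 2 * r' ^ q n)) ⊆ QnSet (q n) (ε n) ∧
        ‖(ε n : ℂ) /
            (1 - Complex.exp (-(2 * Real.pi * Complex.I * ((q n : ℝ) ^ 2 * ε n : ℝ) * Z)))‖ ≤
          M * r ^ q n :=
  statement15_general invA r r' h0 h1 h2 q hqtop ε hε hεlim
end
end

section
/- Let A ∈ (1,+∞] and 1/A < r < r' < r_0 < 1 (with 1/A := 0 if A = +∞). Let (q_n) be positive integers with q_n → ∞, (ε_n) positive reals with ε_n^{1/q_n} → 1/A, and (B_n) positive reals with limsup B_n^{1/q_n} ≤ 1. For each n let η_n ∈ ℂ with |η_n| ≤ B_n ε_n, let k_n: D_{r_0} → ℂ be holomorphic with |k_n(z)| ≤ B_n on D_{r_0}, and define g_n(z) := z + 2πi q_n z(ε_n − z^{q_n})(1 + η_n + (ε_n − z^{q_n})k_n(z)). Then there exists N such that for all n ≥ N, for every holomorphic h: Q_n → ℂ with h(Z)^{q_n} = ε_n/(1 − e^{−2πiq_n²ε_nZ}) on Q_n, and for every Z ∈ Q_n(1/(2πq_n²r^{q_n})): h(Z) ∈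 D_{r_0}, and there exists W ∈ B(Z, 1/(2πq_n²r'^{q_n})) such that h(W) = g_n(h(Z)) and |W − Z − 1| < 1/4. -/
open Filter Set Metric

noncomputable section

/-!
Put `c = q²ε`, `A = exp(-2πicZ)` and `z = h Z`, so that `z^q (1 - A) = ε`. On the sector
`Q_n(a)` the point `cZ` lies in a strip where `‖1 - exp(-2πicZ)‖ ≥ ca/2 = ε/(4πr^q)`; hence
`‖z‖^q ≤ 4πr^q`, which puts `z` in `D_{r₀}` and makes `q²‖ε - z^q‖` small.

Write `g(z) = z(1 + u)` with `u = 2πiq(ε - z^q)T` and `T ≈ 1`. For `W = Z + Δ`, the equation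
`h(W)^q = (z(1 + u))^q` becomes `exp(-2πicΔ) = 1 + D` for an explicit `D ≈ -2πicT`, and the
logarithmic solution has `Δ ≈ T ≈ 1`. Along the segment `[Z, W]` the ratio `(h/z)^q` stays
near `1`, so `h/z` agrees there with the continuous branch `exp(log((h/z)^q)/q)`, whose value
at `W` is `1 + u`.

All smallness conditions hold for large `n`: `ε_n ≤ ι^{q_n}` and `B_n ≤ P^{q_n}` with
`ι < r` and `Pr < 1`, while `q² x^q → 0` for `0 ≤ x < 1`.
-/

open Complex
open scoped Real

theorem IsPreconnected.eqOn_of_pow_eq {α 𝕜 : Type*} [TopologicalSpace α] [Field 𝕜]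
    [TopologicalSpace 𝕜] [T1Space 𝕜] [ContinuousInv₀ 𝕜] [ContinuousMul 𝕜]
    {S : Set α} {f g : α → 𝕜} {m : ℕ} {x₀ : α} (hS : IsPreconnected S)
    (hf : ContinuousOn f S) (hg : ContinuousOn g S) (hg_ne : ∀ x ∈ S, g x ≠ 0) (hm : m ≠ 0)
    (hpow : ∀ x ∈ S, f x ^ m = g x ^ m) (hx₀ : x₀ ∈ S) (h₀ : f x₀ = g x₀) : EqOn f g S := by
  classical
  have hroots : {x : 𝕜 | x ^ m = 1}.Finite :=
    (Polynomial.nthRoots m (1 : 𝕜)).toFinset.finite_toSet.subset fun x hx => by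
      simpa [Polynomial.mem_nthRoots (Nat.pos_of_ne_zero hm)] using hx
  have hmaps : MapsTo (f / g) S {x | x ^ m = 1} := fun x hx => by
    simp [div_pow, hpow x hx, hg_ne x hx]
  intro x hx
  have := hS.constant_of_mapsTo hroots.isDiscrete (hf.div hg hg_ne) hmaps hx hx₀
  simpa [h₀, hg_ne x hx, hg_ne x₀ hx₀, div_eq_one_iff_eq] using this

theorem IsPreconnected.eqOn_exp_log_pow_div {α : Type*} [TopologicalSpace α] {S : Set α}
    {γ : α → ℂ} {m : ℕ} {x₀ : α} (hS : IsPreconnected S) (hγ : ContinuousOn γ S) (hm : m ≠ 0)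
    (hslit : ∀ x ∈ S, γ x ^ m ∈ slitPlane) (hx₀ : x₀ ∈ S) (h₀ : γ x₀ = 1) :
    EqOn γ (fun x => exp (log (γ x ^ m) / m)) S := by
  refine hS.eqOn_of_pow_eq hγ ?_ (fun x _ => exp_ne_zero _) hm (fun x hx => ?_) hx₀ (by simp [h₀])
  · exact continuous_exp.comp_continuousOn (((hγ.pow m).clog hslit).div_const _)
  · rw [← exp_nat_mul, mul_div_cancel₀ _ (Nat.cast_ne_zero.2 hm),
      exp_log (slitPlane_ne_zero (hslit x hx))]

theorem norm_log_one_add_sub_self_le_sq {u : ℂ} (hu : ‖u‖ ≤ 1 / 2) :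
    ‖log (1 + u) - u‖ ≤ ‖u‖ ^ 2 := by
  have := norm_log_one_add_sub_self_le (hu.trans_lt (by norm_num : (1 : ℝ) / 2 < 1))
  have hinv : (1 - ‖u‖)⁻¹ ≤ 2 := by
    rw [inv_le_comm₀ (by linarith) two_pos]; linarith
  nlinarith [norm_nonneg u]

section OneAddPow

variable {m : ℕ} {u : ℂ}

theorem norm_le_half_of_nat_mul_norm_le (hm : m ≠ 0) (hu : m * ‖u‖ ≤ 1 / 2) : ‖u‖ ≤ 1 / 2 :=
  (le_mul_of_one_le_left (norm_nonneg u) (Nat.one_le_cast.2 (Nat.one_le_iff_ne_zero.2 hm))).trans hu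

theorem norm_nat_mul_log_one_add_le (hm : m ≠ 0) (hu : m * ‖u‖ ≤ 1 / 2) :
    ‖(m : ℂ) * log (1 + u)‖ ≤ 3 / 2 * (m * ‖u‖) := by
  rw [norm_mul, norm_natCast]
  nlinarith [norm_log_one_add_half_le_self (norm_le_half_of_nat_mul_norm_le hm hu),
    (Nat.cast_nonneg m : (0 : ℝ) ≤ m)]

theorem one_add_pow_eq_exp (n : ℕ) (hu : ‖u‖ < 1) : (1 + u) ^ n = exp (n * log (1 + u)) := by
  rw [exp_nat_mul, exp_log (slitPlane_ne_zero (mem_slitPlane_of_norm_lt_one hu))]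

theorem exp_log_one_add_pow_div (hm : m ≠ 0) (hu : m * ‖u‖ ≤ 1 / 2) :
    exp (log ((1 + u) ^ m) / m) = 1 + u := by
  have hu1 : ‖u‖ < 1 := (norm_le_half_of_nat_mul_norm_le hm hu).trans_lt (by norm_num)
  have him : |((m : ℂ) * log (1 + u)).im| < π := by
    linarith [abs_im_le_norm ((m : ℂ) * log (1 + u)), norm_nat_mul_log_one_add_le hm hu,
      Real.pi_gt_three]
  rw [one_add_pow_eq_exp m hu1, log_exp (by linarith [abs_lt.1 him]) (by linarith [abs_lt.1 him]),
    mul_div_cancel_left₀ _ (Nat.cast_ne_zero.2 hm), exp_log (slitPlane_ne_zero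
    (mem_slitPlane_of_norm_lt_one hu1))]

theorem norm_inv_one_add_pow_sub_le (hm : m ≠ 0) (hu : m * ‖u‖ ≤ 1 / 2) :
    ‖((1 + u) ^ m)⁻¹ - 1 + m * u‖ ≤ 4 * (m * ‖u‖) ^ 2 := by
  set L := log (1 + u)
  have hmL := norm_nat_mul_log_one_add_le hm hu
  have hexp := norm_exp_sub_one_sub_id_le (x := -(m * L)) (by rw [norm_neg]; linarith)
  have hu' := norm_le_half_of_nat_mul_norm_le hm hu
  have hlog : ‖L - u‖ ≤ ‖u‖ ^ 2 := norm_log_one_add_sub_self_le_sq hu'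
  have hsplit : ((1 + u) ^ m)⁻¹ - 1 + m * u = (exp (-(m * L)) - 1 - -(m * L)) - m * (L - u) := by
    rw [one_add_pow_eq_exp m (hu'.trans_lt (by norm_num)), ← exp_neg]; ring
  have hm1 : (1 : ℝ) ≤ m := Nat.one_le_cast.2 (Nat.one_le_iff_ne_zero.2 hm)
  calc ‖((1 + u) ^ m)⁻¹ - 1 + m * u‖ ≤ ‖m * L‖ ^ 2 + m * ‖u‖ ^ 2 := by
        rw [hsplit]
        refine (norm_sub_le _ _).trans (add_le_add (by simpa using hexp) ?_)
        rw [norm_mul, norm_natCast]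
        exact mul_le_mul_of_nonneg_left hlog (Nat.cast_nonneg m)
    _ ≤ 4 * (m * ‖u‖) ^ 2 := by
        have h1 : ‖(m : ℂ) * L‖ ^ 2 ≤ (3 / 2 * (m * ‖u‖)) ^ 2 :=
          pow_le_pow_left₀ (norm_nonneg _) hmL 2
        have h2 : (m : ℝ) * ‖u‖ ^ 2 ≤ (m * ‖u‖) ^ 2 := by nlinarith [norm_nonneg u]
        nlinarith

end OneAddPow

theorem two_mul_le_sin_pi_mul {x δ : ℝ} (hδ : 0 ≤ δ) (h1 : δ ≤ x) (h2 : x ≤ 1 - δ) :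
    2 * δ ≤ Real.sin (π * x) := by
  have key : ∀ y, δ ≤ y → y ≤ 1 / 2 → 2 * δ ≤ Real.sin (π * y) := fun y hy hy' => by
    have := Real.mul_le_sin (by nlinarith [Real.pi_pos]) (by nlinarith [Real.pi_pos] : π * y ≤ π / 2)
    rw [← mul_assoc, div_mul_cancel₀ _ Real.pi_ne_zero] at this
    linarith
  rcases le_total x (1 / 2) with hx | hx
  · exact key x h1 hx
  · rw [← Real.sin_pi_sub, ← mul_one_sub]
    exact key (1 - x) (by linarith) (by linarith)

theorem norm_one_sub_exp_sq (ζ : ℂ) :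
    ‖1 - exp ζ‖ ^ 2 = (1 - Real.exp ζ.re) ^ 2 + 4 * Real.exp ζ.re * Real.sin (ζ.im / 2) ^ 2 := by
  have hcos := Real.cos_two_mul_eq_one_sub (ζ.im / 2)
  have hpyth := Real.sin_sq_add_cos_sq ζ.im
  rw [mul_div_cancel₀ _ two_ne_zero] at hcos
  rw [Complex.sq_norm, normSq_apply]
  simp only [sub_re, sub_im, one_re, one_im, exp_re, exp_im]
  linear_combination (Real.exp ζ.re ^ 2) * hpyth - 2 * Real.exp ζ.re * hcos

theorem half_le_norm_one_sub_exp {w : ℂ} {b : ℝ} (hb : 0 < b) (hb' : b ≤ 1 / 4)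
    (h1 : b - 1 - |w.im| < w.re) (h2 : w.re < -b + |w.im|) :
    b / 2 ≤ ‖1 - exp (-(2 * π * I * w))‖ := by
  set ζ := -(2 * π * I * w)
  have hre : ζ.re = 2 * π * w.im := by simp [ζ]
  have him : ζ.im / 2 = π * -w.re := by simp [ζ]; ring
  have hπ := Real.pi_gt_three
  have hexp := Real.add_one_le_exp (π * b)
  have hR := Real.exp_pos ζ.re
  refine le_of_pow_le_pow_left₀ two_ne_zero (norm_nonneg _) ?_
  rw [norm_one_sub_exp_sq, him]
  -- Either `exp ζ.re` is far from `1`, or `|w.im| < b/2` and then `w.re ∈ (b/2 - 1, -b/2)`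
  -- keeps `sin (π w.re)` away from `0`.
  have hsin := sq_nonneg (Real.sin (π * -w.re))
  rcases le_or_gt (b / 2) w.im with hpos | hsmall
  · have : π * b + 1 ≤ Real.exp ζ.re :=
      hexp.trans (Real.exp_le_exp.2 (by rw [hre]; nlinarith))
    have : b / 2 ≤ Real.exp ζ.re - 1 := by nlinarith
    nlinarith
  rcases le_or_gt w.im (-(b / 2)) with hneg | hmid
  · have hRE : Real.exp ζ.re * Real.exp (π * b) ≤ 1 := by
      rw [← Real.exp_add, ← Real.exp_zero]; exact Real.exp_le_exp.2 (by rw [hre]; nlinarith)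
    have : Real.exp ζ.re * (1 + π * b) ≤ 1 := by nlinarith
    have : b / 2 ≤ 1 - Real.exp ζ.re := by
      by_contra! hlt
      nlinarith [mul_lt_mul_of_pos_right hlt (by positivity : 0 < 1 + π * b),
        mul_le_mul_of_nonneg_left hb' (by positivity : 0 ≤ π * b)]
    nlinarith
  · have hw : |w.im| < b / 2 := abs_lt.2 ⟨hmid, hsmall⟩
    have hs : b ≤ Real.sin (π * -w.re) := by
      have := two_mul_le_sin_pi_mul (x := -w.re) (δ := b / 2) (by positivity)
        (by linarith [neg_abs_le w.im]) (by linarith [le_abs_self w.im])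
      linarith
    have : 1 / 5 ≤ Real.exp ζ.re := by
      have := Real.add_one_le_exp ζ.re
      nlinarith [abs_lt.1 hw, Real.pi_lt_d2]
    nlinarith

theorem norm_two_pi_I_mul {c : ℝ} (hc : 0 ≤ c) (x : ℂ) :
    ‖2 * π * I * c * x‖ = 2 * π * c * ‖x‖ := by
  simp [abs_of_nonneg hc, abs_of_pos Real.pi_pos]

theorem exists_exp_eq_one_add {c : ℝ} {D T : ℂ} (hc : 0 < c) (hc' : c ≤ 1 / 10000)
    (hT : ‖T - 1‖ ≤ 1 / 50) (hD : ‖D + 2 * π * I * c * T‖ ≤ c / 20) :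
    ∃ Δ : ℂ, exp (-(2 * π * I * c * Δ)) = 1 + D ∧ ‖Δ - 1‖ ≤ 1 / 30 := by
  have hπ := Real.pi_gt_three
  have hπ' := Real.pi_lt_d2
  have hcT : ‖2 * π * I * c * T‖ ≤ 2 * π * c * (51 / 50) := by
    rw [norm_two_pi_I_mul hc.le]
    have := norm_le_norm_add_norm_sub' T 1
    gcongr; norm_num at this ⊢; linarith
  have hDle : ‖D‖ ≤ 7 * c := by
    have := norm_sub_le (D + 2 * π * I * c * T) (2 * π * I * c * T)
    rw [add_sub_cancel_right] at this
    nlinarith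
  have hlog := norm_log_one_add_sub_self_le_sq (u := D) (by linarith)
  have h2πc : (2 * π * I * c : ℂ) ≠ 0 := by simp [hc.ne', Real.pi_ne_zero]
  refine ⟨-log (1 + D) / (2 * π * I * c), ?_, ?_⟩
  · rw [mul_div_cancel₀ _ h2πc, neg_neg, exp_log]
    exact slitPlane_ne_zero (mem_slitPlane_of_norm_lt_one (by linarith))
  · have hsplit : -log (1 + D) / (2 * π * I * c) - 1 = -((log (1 + D) - D) +
        (D + 2 * π * I * c * T) + 2 * π * I * c * (1 - T)) / (2 * π * I * c) := by
      rw [div_sub_one h2πc]; congr 1; ring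
    have h1T : ‖2 * π * I * c * (1 - T)‖ ≤ 2 * π * c * (1 / 50) := by
      rw [norm_two_pi_I_mul hc.le, norm_sub_rev]; gcongr
    have hk : ‖(2 * π * I * c : ℂ)‖ = 2 * π * c := by simpa using norm_two_pi_I_mul hc.le 1
    rw [hsplit, norm_div, norm_neg, hk, div_le_iff₀ (by positivity)]
    calc _ ≤ ‖log (1 + D) - D‖ + ‖D + 2 * π * I * c * T‖ + ‖2 * π * I * c * (1 - T)‖ :=
          norm_add₃_le
      _ ≤ 1 / 30 * (2 * π * c) := by nlinarith [norm_nonneg D]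

theorem inv_mem_slitPlane {w : ℂ} (hw : w ∈ slitPlane) : w⁻¹ ∈ slitPlane := by
  rw [mem_slitPlane_iff] at *
  have := normSq_pos.2 (slitPlane_ne_zero hw)
  simp only [inv_re, inv_im]
  rcases hw with h | h
  · left; positivity
  · right; simp [h, this.ne']

theorem div_one_sub_mul_mul_mem_slitPlane {ε : ℝ} (hε : 0 < ε) {A w s : ℂ}
    (hwA : w * (1 - A) = ε) (hs : ‖w - ε‖ * ‖1 - s‖ < ε) :
    ε / ((1 - A * s) * w) ∈ slitPlane := by
  have hε' : (ε : ℂ) ≠ 0 := ofReal_ne_zero.2 hε.ne'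
  have hx : ‖(w - ε) * (1 - s) / ε‖ < 1 := by
    rwa [norm_div, norm_mul, norm_real, Real.norm_of_nonneg hε.le, div_lt_one hε]
  have hid : (1 - A * s) * w = ε * (1 + (w - ε) * (1 - s) / ε) := by
    field_simp; linear_combination s * hwA
  rw [hid, div_mul_cancel_left₀ hε']
  exact inv_mem_slitPlane (mem_slitPlane_of_norm_lt_one hx)

section TwoPiIMul

variable {m : ℕ} {ε c : ℝ} {w T : ℂ}

theorem nat_mul_norm_two_pi_I_mul_le (hT : ‖T - 1‖ ≤ 1 / 50) :
    m * ‖2 * π * I * m * (ε - w) * T‖ ≤ 7 * (m ^ 2 * ‖ε - w‖) := by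
  have hT' : ‖T‖ ≤ 51 / 50 := by linarith [norm_le_norm_add_norm_sub' T 1, norm_one (α := ℂ)]
  have : m * ‖2 * π * I * m * (ε - w) * T‖ = 2 * π * ‖T‖ * (m ^ 2 * ‖ε - w‖) := by
    simp [abs_of_pos Real.pi_pos]; ring
  rw [this]
  gcongr
  nlinarith [Real.pi_lt_d2, Real.pi_pos]

theorem norm_add_two_pi_I_mul_le (hm : m ≠ 0) (hε : 0 < ε) (hc : c = m ^ 2 * ε) (hw : w ≠ ε)
    (hρ : m ^ 2 * ‖ε - w‖ ≤ 1 / 5000) (hT : ‖T - 1‖ ≤ 1 / 50) :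
    ‖ε * (1 - ((1 + 2 * π * I * m * (ε - w) * T) ^ m)⁻¹) / (w - ε) + 2 * π * I * c * T‖ ≤
      c / 20 := by
  set u := 2 * π * I * m * (ε - w) * T
  have hmu := nat_mul_norm_two_pi_I_mul_le hT (m := m) (w := w) (ε := ε)
  have hw' : w - ε ≠ 0 := sub_ne_zero.2 hw
  have hsplit : ε * (1 - ((1 + u) ^ m)⁻¹) / (w - ε) + 2 * π * I * c * T =
      -(ε * (((1 + u) ^ m)⁻¹ - 1 + m * u) / (w - ε)) := by
    simp only [u, hc]; push_cast; field_simp; ring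
  rw [hsplit, norm_neg, norm_div, norm_mul, norm_real, Real.norm_of_nonneg hε.le,
    div_le_iff₀ (norm_pos_iff.2 hw'), norm_sub_rev w]
  have hρ' : 0 ≤ (m : ℝ) ^ 2 * ‖ε - w‖ := by positivity
  have hV := norm_inv_one_add_pow_sub_le hm (u := u) (by linarith)
  have hsq : ((m : ℝ) * ‖u‖) ^ 2 ≤ (7 * (m ^ 2 * ‖ε - w‖)) ^ 2 :=
    pow_le_pow_left₀ (by positivity) hmu 2
  calc ε * ‖((1 + u) ^ m)⁻¹ - 1 + m * u‖ ≤ ε * (196 * (m ^ 2 * ‖ε - w‖) ^ 2) := by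
        gcongr; linarith
    _ = 196 * (m ^ 2 * ‖ε - w‖) * (m ^ 2 * ε) * ‖ε - w‖ := by ring
    _ ≤ c / 20 * ‖ε - w‖ := by
        have hc0 : 0 ≤ c := hc ▸ by positivity
        rw [← hc]; gcongr; nlinarith

end TwoPiIMul

theorem div_one_sub_mul_exp_mem_slitPlane {m : ℕ} {ε c : ℝ} (hε : 0 < ε) (hc : c = m ^ 2 * ε)
    (hc' : c ≤ 1 / 10000) {A w ζ : ℂ} (hwA : w * (1 - A) = ε)
    (hρ : m ^ 2 * ‖ε - w‖ ≤ 1 / 5000) (hζ : ‖ζ‖ ≤ 2) :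
    ε / ((1 - A * exp (-(2 * π * I * c * ζ))) * w) ∈ slitPlane := by
  have hc0 : 0 ≤ c := hc ▸ by positivity
  refine div_one_sub_mul_mul_mem_slitPlane hε hwA ?_
  have hx : ‖-(2 * π * I * c * ζ)‖ ≤ 4 * π * c := by
    rw [norm_neg, norm_two_pi_I_mul hc0]
    linarith [mul_le_mul_of_nonneg_left hζ (by positivity : (0 : ℝ) ≤ 2 * π * c)]
  have h1 : ‖1 - exp (-(2 * π * I * c * ζ))‖ ≤ 8 * π * c := by
    rw [norm_sub_rev]
    linarith [norm_exp_sub_one_le (hx.trans (by nlinarith [Real.pi_lt_d2]))]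
  calc ‖w - ε‖ * ‖1 - exp (-(2 * π * I * c * ζ))‖ ≤ ‖ε - w‖ * (8 * π * c) := by
        rw [norm_sub_rev]; gcongr
    _ = 8 * π * (m ^ 2 * ‖ε - w‖) * ε := by rw [hc]; ring
    _ < ε := by
        refine mul_lt_of_lt_one_left hε (lt_of_le_of_lt (b := 8 * 3.15 * (1 / 5000)) ?_ ?_)
        · gcongr; exact Real.pi_lt_d2.le
        · norm_num

theorem div_one_sub_mul_one_add_div_eq {ε A w P : ℂ} (hε : ε ≠ 0) (hwA : w * (1 - A) = ε)
    (hwε : w ≠ ε) (hP : P ≠ 0) : ε / (1 - A * (1 + ε * (1 - P⁻¹) / (w - ε))) / w = P := by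
  have hw : w ≠ 0 := fun h => hε (by rw [← hwA, h, zero_mul])
  have hden : 1 - A * (1 + ε * (1 - P⁻¹) / (w - ε)) = ε / (w * P) := by
    rw [eq_div_iff (mul_ne_zero hw hP)]
    field_simp [sub_ne_zero.2 hwε]
    linear_combination (w * P - ε) * hwA
  rw [hden]
  field_simp

theorem exists_lift_mul_one_add {m : ℕ} (hm : m ≠ 0) {ε c : ℝ} (hε : 0 < ε) (hc : c = m ^ 2 * ε)
    (hc' : c ≤ 1 / 10000) {A z T : ℂ} (hA : A ≠ 0) (hzA : z ^ m * (1 - A) = ε)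
    (hρ : m ^ 2 * ‖ε - z ^ m‖ ≤ 1 / 5000) (hT : ‖T - 1‖ ≤ 1 / 50) {f : ℂ → ℂ}
    (hf : ContinuousOn f (closedBall 0 2))
    (hfpow : ∀ ζ ∈ closedBall (0 : ℂ) 2, f ζ ^ m = ε / (1 - A * exp (-(2 * π * I * c * ζ))))
    (hf0 : f 0 = z) :
    ∃ Δ : ℂ, ‖Δ - 1‖ ≤ 1 / 30 ∧ f Δ = z * (1 + 2 * π * I * m * (ε - z ^ m) * T) := by
  have hε' : (ε : ℂ) ≠ 0 := ofReal_ne_zero.2 hε.ne'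
  have hzm : z ^ m ≠ 0 := fun h => hε' (by rw [← hzA, h, zero_mul])
  have hz : z ≠ 0 := fun h => hzm (by rw [h, zero_pow hm])
  have hzε : z ^ m ≠ ε := fun h => hA (by
    have : z ^ m * A = 0 := by linear_combination h - hzA
    simpa [hzm] using this)
  -- `D` is chosen so that `ε / (1 - A (1 + D)) = z^m (1 + u)^m`
  -- (`div_one_sub_mul_one_add_div_eq`).
  obtain ⟨Δ, hexpΔ, hΔ⟩ := exists_exp_eq_one_add (hc ▸ by positivity) hc' hT
    (norm_add_two_pi_I_mul_le hm hε hc hzε hρ hT)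
  set u := 2 * π * I * m * (ε - z ^ m) * T
  have hmu : m * ‖u‖ ≤ 1 / 2 := (nat_mul_norm_two_pi_I_mul_le hT).trans (by linarith)
  have hseg : segment ℝ 0 Δ ⊆ closedBall 0 2 := by
    refine (convex_closedBall 0 2).segment_subset (mem_closedBall_self (by norm_num)) ?_
    rw [mem_closedBall_zero_iff]
    linarith [norm_le_norm_add_norm_sub' Δ 1, norm_one (α := ℂ)]
  have hslit : ∀ ζ ∈ segment ℝ 0 Δ, (f ζ / z) ^ m ∈ slitPlane := fun ζ hζ => by
    rw [div_pow, hfpow ζ (hseg hζ), div_div]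
    exact div_one_sub_mul_exp_mem_slitPlane hε hc hc' hzA hρ
      (mem_closedBall_zero_iff.1 (hseg hζ))
  have hfΔ : (f Δ / z) ^ m = (1 + u) ^ m := by
    rw [div_pow, hfpow Δ (hseg (right_mem_segment ℝ 0 Δ)), hexpΔ]
    exact div_one_sub_mul_one_add_div_eq hε' hzA hzε (pow_ne_zero _ (slitPlane_ne_zero
      (mem_slitPlane_of_norm_lt_one ((norm_le_half_of_nat_mul_norm_le hm hmu).trans_lt
        (by norm_num)))))
  have := (convex_segment (0 : ℂ) Δ).isPreconnected.eqOn_exp_log_pow_div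
    ((hf.mono hseg).div_const z) hm hslit (left_mem_segment ℝ 0 Δ) (by rw [hf0, div_self hz])
    (right_mem_segment ℝ 0 Δ)
  dsimp only at this
  rw [hfΔ, exp_log_one_add_pow_div hm hmu] at this
  exact ⟨Δ, hΔ, by rw [← this, mul_div_cancel₀ _ hz]⟩

section Sector

variable {q : ℕ} {ε a : ℝ} {Z : ℂ}

theorem add_mem_QnSet_of_mem_QnSector (hZ : Z ∈ QnSector q ε a) {ζ : ℂ} (hζ : ‖ζ‖ ≤ a / 2) :
    Z + ζ ∈ QnSet q ε := by
  obtain ⟨h1, h2⟩ := hZ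
  simp only [add_re, add_im, sub_re, sub_im, ofReal_re, ofReal_im, sub_zero, add_zero] at h1 h2
  rcases lt_trichotomy (Z + ζ).im 0 with him | him | him
  · exact Or.inl (Or.inr him)
  · have hZim : |Z.im| = |ζ.im| := by
      rw [add_im] at him; rw [show Z.im = -ζ.im by linarith, abs_neg]
    have hre := abs_le.1 (abs_re_le_norm ζ)
    have him' := abs_im_le_norm ζ
    refine Or.inr ⟨him, ?_, ?_⟩ <;> simp only [add_re] <;> linarith
  · exact Or.inl (Or.inl him)

theorem half_mul_le_norm_one_sub_exp_of_mem_QnSector (hZ : Z ∈ QnSector q ε a)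
    (hc : 0 < (q : ℝ) ^ 2 * ε) (hb : 0 < (q : ℝ) ^ 2 * ε * a) (hb' : (q : ℝ) ^ 2 * ε * a ≤ 1 / 4) :
    (q : ℝ) ^ 2 * ε * a / 2 ≤ ‖1 - exp (-(2 * π * I * ((q : ℝ) ^ 2 * ε : ℝ) * Z))‖ := by
  set c := (q : ℝ) ^ 2 * ε
  obtain ⟨h1, h2⟩ := hZ
  simp only [add_re, add_im, sub_re, sub_im, ofReal_re, ofReal_im, sub_zero, add_zero] at h1 h2
  have hw : (c * Z : ℂ).re = c * Z.re ∧ (c * Z : ℂ).im = c * Z.im := by simp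
  have habs : |c * Z.im| = c * |Z.im| := by rw [abs_mul, abs_of_pos hc]
  rw [show 2 * π * I * (c : ℂ) * Z = 2 * π * I * (c * Z) by ring]
  refine half_le_norm_one_sub_exp hb hb' ?_ ?_ <;> rw [hw.1, hw.2, habs]
  · have := mul_lt_mul_of_pos_left h1 hc
    rw [mul_add, mul_one_div_cancel hc.ne'] at this
    nlinarith
  · nlinarith [mul_lt_mul_of_pos_left h2 hc]

end Sector

section Lift

variable {m : ℕ} {r ε : ℝ} {h : ℂ → ℂ} {Z : ℂ}

theorem pow_mul_eq_and_norm_pow_le_of_mem_QnSector (hm : m ≠ 0) (hr : 0 < r) (hε : 0 < ε)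
    (hεr : 10 * ε ≤ r ^ m)
    (heq : ∀ Z ∈ QnSet m ε,
      h Z ^ m = ε / (1 - exp (-(2 * π * I * ((m : ℝ) ^ 2 * ε : ℝ) * Z))))
    (hZ : Z ∈ QnSector m ε (1 / (2 * π * (m : ℝ) ^ 2 * r ^ m))) :
    h Z ^ m * (1 - exp (-(2 * π * I * ((m : ℝ) ^ 2 * ε : ℝ) * Z))) = ε ∧
      ‖h Z ^ m‖ ≤ 4 * π * r ^ m := by
  have hm' : (0 : ℝ) < m := Nat.cast_pos.2 (Nat.pos_of_ne_zero hm)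
  have hrm : 0 < r ^ m := pow_pos hr m
  have hb : (m : ℝ) ^ 2 * ε * (1 / (2 * π * (m : ℝ) ^ 2 * r ^ m)) = ε / (2 * π * r ^ m) := by
    field_simp
  have hb0 : 0 < ε / (2 * π * r ^ m) := by positivity
  have hlow := half_mul_le_norm_one_sub_exp_of_mem_QnSector hZ (by positivity) (hb ▸ hb0) (by
    rw [hb, div_le_iff₀ (by positivity)]; nlinarith [Real.pi_gt_three])
  rw [hb] at hlow
  have hA := (half_pos hb0).trans_le hlow
  have hZQ : Z ∈ QnSet m ε := by
    simpa using add_mem_QnSet_of_mem_QnSector hZ (ζ := 0) (by rw [norm_zero]; positivity)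
  refine ⟨by rw [heq Z hZQ, div_mul_cancel₀ _ (norm_pos_iff.1 hA)], ?_⟩
  rw [heq Z hZQ, norm_div, norm_real, Real.norm_of_nonneg hε.le, div_le_iff₀ hA]
  calc ε = 4 * π * r ^ m * (ε / (2 * π * r ^ m) / 2) := by field_simp; ring
    _ ≤ _ := by gcongr

theorem mem_ball_of_mem_QnSector (hm : m ≠ 0) (hr : 0 < r) (hε : 0 < ε) {r0 : ℝ} (hr0 : 0 ≤ r0)
    (hεr : 10 * ε ≤ r ^ m) (hrr0 : 16 * r ^ m ≤ r0 ^ m)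
    (heq : ∀ Z ∈ QnSet m ε,
      h Z ^ m = ε / (1 - exp (-(2 * π * I * ((m : ℝ) ^ 2 * ε : ℝ) * Z))))
    (hZ : Z ∈ QnSector m ε (1 / (2 * π * (m : ℝ) ^ 2 * r ^ m))) :
    h Z ∈ ball (0 : ℂ) r0 := by
  have hzm := (pow_mul_eq_and_norm_pow_le_of_mem_QnSector hm hr hε hεr heq hZ).2
  rw [mem_ball_zero_iff, ← pow_lt_pow_iff_left₀ (norm_nonneg _) hr0 hm, ← norm_pow]
  nlinarith [pow_pos hr m, Real.pi_lt_d2]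

theorem exists_lift_of_mem_QnSector (hm : m ≠ 0) (hr : 0 < r) (hε : 0 < ε) {r' B : ℝ}
    (hrr' : r ≤ r') (hB : 0 ≤ B) (hεr : 10 * ε ≤ r ^ m) (hr' : (m : ℝ) ^ 2 * r' ^ m ≤ 1 / 100000)
    (hBr : B * r ^ m ≤ 1 / 1000) {η : ℂ} {k : ℂ → ℂ} (hη : ‖η‖ ≤ B * ε) (hk : ‖k (h Z)‖ ≤ B)
    (hh : ContinuousOn h (QnSet m ε))
    (heq : ∀ Z ∈ QnSet m ε,
      h Z ^ m = ε / (1 - exp (-(2 * π * I * ((m : ℝ) ^ 2 * ε : ℝ) * Z))))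
    (hZ : Z ∈ QnSector m ε (1 / (2 * π * (m : ℝ) ^ 2 * r ^ m))) :
    ∃ W ∈ ball Z (1 / (2 * π * (m : ℝ) ^ 2 * r' ^ m)),
      h W = h Z + 2 * π * I * m * h Z * (ε - h Z ^ m) * (1 + η + (ε - h Z ^ m) * k (h Z)) ∧
      ‖W - Z - 1‖ < 1 / 4 := by
  set z := h Z
  set c := (m : ℝ) ^ 2 * ε
  have hrm : r ^ m ≤ r' ^ m := pow_le_pow_left₀ hr.le hrr' m
  have hr'm : 0 < r' ^ m := pow_pos (hr.trans_le hrr') m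
  have ha : 2 * π * (m : ℝ) ^ 2 * r' ^ m ≤ 1 / 10000 := by
    have : 0 ≤ (m : ℝ) ^ 2 * r' ^ m := by positivity
    nlinarith [Real.pi_lt_d2]
  obtain ⟨hzA, hzm⟩ := pow_mul_eq_and_norm_pow_le_of_mem_QnSector hm hr hε hεr heq hZ
  have he0 : ‖(ε : ℂ) - z ^ m‖ ≤ 13 * r ^ m := by
    have := norm_sub_le (ε : ℂ) (z ^ m)
    rw [norm_real, Real.norm_of_nonneg hε.le] at this
    nlinarith [pow_pos hr m, Real.pi_lt_d2]
  have hball : ∀ ζ ∈ closedBall (0 : ℂ) 2, Z + ζ ∈ QnSet m ε := fun ζ hζ =>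
    add_mem_QnSet_of_mem_QnSector hZ (by
      rw [mem_closedBall_zero_iff] at hζ
      refine hζ.trans ((le_div_iff₀ two_pos).2 ((le_div_iff₀ (by positivity)).2 ?_))
      nlinarith [mul_le_mul_of_nonneg_left hrm (by positivity : 0 ≤ 2 * π * (m : ℝ) ^ 2)])
  have hT : ‖1 + η + (ε - z ^ m) * k z - 1‖ ≤ 1 / 50 := by
    calc ‖1 + η + (ε - z ^ m) * k z - 1‖ ≤ ‖η‖ + ‖(ε : ℂ) - z ^ m‖ * ‖k z‖ := by
          rw [add_sub_right_comm, add_sub_cancel_left, ← norm_mul]; exact norm_add_le _ _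
      _ ≤ 1 / 50 := by nlinarith [norm_nonneg ((ε : ℂ) - z ^ m), norm_nonneg (k z)]
  have hpow : ∀ ζ ∈ closedBall (0 : ℂ) 2, h (Z + ζ) ^ m =
      ε / (1 - exp (-(2 * π * I * c * Z)) * exp (-(2 * π * I * c * ζ))) := fun ζ hζ => by
    rw [heq _ (hball ζ hζ), ← exp_add]
    ring_nf
  obtain ⟨Δ, hΔ, hfΔ⟩ := exists_lift_mul_one_add hm hε rfl (by nlinarith) (exp_ne_zero _) hzA
    (by nlinarith [norm_nonneg ((ε : ℂ) - z ^ m)]) hT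
    (hh.comp (continuous_const.add continuous_id).continuousOn hball) hpow (by simp)
  refine ⟨Z + Δ, ?_, hfΔ.trans (by ring), by rw [add_sub_cancel_left]; linarith⟩
  rw [mem_ball, dist_eq, add_sub_cancel_left, lt_div_iff₀ (by positivity)]
  have : ‖Δ‖ ≤ 31 / 30 := by linarith [norm_le_norm_add_norm_sub' Δ 1, norm_one (α := ℂ)]
  nlinarith [mul_le_mul_of_nonneg_right this (by positivity : 0 ≤ 2 * π * (m : ℝ) ^ 2 * r' ^ m)]

end Lift

theorem le_pow_of_rpow_one_div_le {x ρ : ℝ} {q : ℕ} (hx : 0 ≤ x) (hq : q ≠ 0)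
    (h : x ^ (1 / (q : ℝ)) ≤ ρ) : x ≤ ρ ^ q := by
  rw [one_div] at h
  rw [← Real.rpow_inv_natCast_pow hx hq]
  exact pow_le_pow_left₀ (Real.rpow_nonneg hx _) h q

theorem eventually_pow_le_mul_pow {q : ℕ → ℕ} (hq : Tendsto q atTop atTop) {x y δ : ℝ}
    (hx : 0 ≤ x) (hxy : x < y) (hδ : 0 < δ) : ∀ᶠ n in atTop, x ^ q n ≤ δ * y ^ q n := by
  have hy : 0 < y := hx.trans_lt hxy
  have hlim := ((tendsto_pow_atTop_nhds_zero_of_lt_one (div_nonneg hx hy.le)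
    ((div_lt_one hy).2 hxy)).comp hq).eventually (ge_mem_nhds hδ)
  filter_upwards [hlim] with n hn
  rwa [Function.comp_apply, div_pow, div_le_iff₀ (pow_pos hy _)] at hn

theorem eventually_parameters_small {invA r r' r0 : ℝ} (h0 : 0 ≤ invA) (h1 : invA < r)
    (h2 : r < r') (h3 : r' < r0) (h4 : r0 < 1) {q : ℕ → ℕ} (hq : ∀ n, 0 < q n)
    (hqtop : Tendsto q atTop atTop) {ε B : ℕ → ℝ} (hε : ∀ n, 0 < ε n)
    (hεlim : Tendsto (fun n => (ε n) ^ (1 / (q n : ℝ))) atTop (nhds invA)) (hB : ∀ n, 0 < B n)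
    (hBlim : limsup (fun n => ENNReal.ofReal ((B n) ^ (1 / (q n : ℝ)))) atTop ≤ 1) :
    ∀ᶠ n in atTop, 10 * ε n ≤ r ^ q n ∧ 16 * r ^ q n ≤ r0 ^ q n ∧
      (q n : ℝ) ^ 2 * r' ^ q n ≤ 1 / 100000 ∧ B n * r ^ q n ≤ 1 / 1000 := by
  have hr : 0 < r := h0.trans_lt h1
  obtain ⟨ι, hι, hιr⟩ := exists_between h1
  obtain ⟨P, hP, hPr⟩ := exists_between ((one_lt_div hr).2 (h2.trans (h3.trans h4)))
  have hει : ∀ᶠ n in atTop, ε n ≤ ι ^ q n := by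
    filter_upwards [hεlim.eventually (gt_mem_nhds hι)] with n hn
    exact le_pow_of_rpow_one_div_le (hε n).le (hq n).ne' hn.le
  have hBP : ∀ᶠ n in atTop, B n ≤ P ^ q n := by
    have : limsup (fun n => ENNReal.ofReal ((B n) ^ (1 / (q n : ℝ)))) atTop < ENNReal.ofReal P :=
      hBlim.trans_lt (by rwa [← ENNReal.ofReal_one, ENNReal.ofReal_lt_ofReal_iff (by linarith)])
    filter_upwards [eventually_lt_of_limsup_lt this] with n hn
    exact le_pow_of_rpow_one_div_le (hB n).le (hq n).ne'
      ((ENNReal.ofReal_lt_ofReal_iff_of_nonneg (Real.rpow_nonneg (hB n).le _)).1 hn).le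
  have hr' : ∀ᶠ n in atTop, (q n : ℝ) ^ 2 * r' ^ q n ≤ 1 / 100000 :=
    ((tendsto_pow_const_mul_const_pow_of_lt_one 2 (by linarith) (by linarith)).comp hqtop).eventually
      (ge_mem_nhds (by norm_num))
  have hPr' : P * r < 1 := by rwa [lt_div_iff₀ hr] at hPr
  filter_upwards [hει, hBP, hr', eventually_pow_le_mul_pow hqtop (h0.trans hι.le) hιr (by norm_num : (0 : ℝ) < 1 / 10),
    eventually_pow_le_mul_pow hqtop hr.le (h2.trans h3) (by norm_num : (0 : ℝ) < 1 / 16),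
    eventually_pow_le_mul_pow hqtop (by positivity) hPr' (by norm_num : (0 : ℝ) < 1 / 1000)]
    with n hεn hBn hr'n hιn hrn hPn
  refine ⟨by linarith, by linarith, hr'n, ?_⟩
  rw [one_pow, mul_one, mul_pow] at hPn
  exact (mul_le_mul_of_nonneg_right hBn (pow_pos hr _).le).trans hPn

theorem statement16_general (invA r r' r0 : ℝ)
    (h0 : 0 ≤ invA) (h1 : invA < r) (h2 : r < r') (h3 : r' < r0) (h4 : r0 < 1)
    (q : ℕ → ℕ) (hq : ∀ n, 0 < q n) (hqtop : Tendsto q atTop atTop)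
    (ε : ℕ → ℝ) (hε : ∀ n, 0 < ε n)
    (hεlim : Tendsto (fun n => (ε n) ^ (1 / (q n : ℝ))) atTop (nhds invA))
    (B : ℕ → ℝ) (hB : ∀ n, 0 < B n)
    (hBlim : Filter.limsup
      (fun n => ENNReal.ofReal ((B n) ^ (1 / (q n : ℝ)))) Filter.atTop ≤ 1)
    (η : ℕ → ℂ) (hη : ∀ n, ‖η n‖ ≤ B n * ε n)
    (k : ℕ → ℂ → ℂ)
    (hkbd : ∀ n, ∀ z ∈ Metric.ball (0 : ℂ) r0, ‖k n z‖ ≤ B n)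
    (g : ℕ → ℂ → ℂ)
    (hg : ∀ n z, g n z = z + 2 * Real.pi * Complex.I * (q n : ℂ) * z *
      ((ε n : ℂ) - z ^ q n) * (1 + η n + ((ε n : ℂ) - z ^ q n) * k n z)) :
    ∃ N : ℕ, ∀ n ≥ N, ∀ h : ℂ → ℂ,
      DifferentiableOn ℂ h (QnSet (q n) (ε n)) →
      (∀ Z ∈ QnSet (q n) (ε n), h Z ^ q n =
        (ε n : ℂ) /
          (1 - Complex.exp (-(2 * Real.pi * Complex.I * ((q n : ℝ) ^ 2 * ε n : ℝ) * Z)))) →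
      ∀ Z ∈ QnSector (q n) (ε n) (1 / (2 * Real.pi * (q n : ℝ) ^ 2 * r ^ q n)),
        h Z ∈ Metric.ball (0 : ℂ) r0 ∧
        ∃ W ∈ Metric.ball Z (1 / (2 * Real.pi * (q n : ℝ) ^ 2 * r' ^ q n)),
          h W = g n (h Z) ∧ ‖W - Z - 1‖ < 1 / 4 := by
  obtain ⟨N, hN⟩ := eventually_atTop.1 (eventually_parameters_small h0 h1 h2 h3 h4 hq hqtop hε
    hεlim hB hBlim)
  refine ⟨N, fun n hn h hh heq Z hZ => ?_⟩
  obtain ⟨hεr, hrr0, hr', hBr⟩ := hN n hn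
  have hr : 0 < r := h0.trans_lt h1
  have hz := mem_ball_of_mem_QnSector (hq n).ne' hr (hε n) (by linarith) hεr hrr0 heq hZ
  rw [hg]
  exact ⟨hz, exists_lift_of_mem_QnSector (hq n).ne' hr (hε n) h2.le (hB n).le hεr hr' hBr (hη n)
    (hkbd n _ hz) hh.continuousOn heq hZ⟩

/-- Lemma 3.1(b). With `1/A < r < r' < r_0 < 1`, `ε_n^{1/q_n} → 1/A`,
`limsup B_n^{1/q_n} ≤ 1`, `|η_n| ≤ B_n ε_n`, `k_n` holomorphic on `D_{r_0}` with `|k_n| ≤ B_n`,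
and `g_n(z) = z + 2πi q_n z(ε_n − z^{q_n})(1 + η_n + (ε_n − z^{q_n})k_n(z))`: for all large `n`,
every branch `h` of the `q_n`-th root of `ε_n/(1 − e^{−2πiq_n²ε_nZ})` on `Q_n`, and every
`Z ∈ Q_n(1/(2πq_n²r^{q_n}))`, satisfy `h(Z) ∈ D_{r_0}` and there is
`W ∈ B(Z, 1/(2πq_n²r'^{q_n}))` with `h(W) = g_n(h(Z))` and `|W − Z − 1| < 1/4`. -/
theorem statement16 (invA r r' r0 : ℝ)
    (h0 : 0 ≤ invA) (h1 : invA < r) (h2 : r < r') (h3 : r' < r0) (h4 : r0 < 1)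
    (q : ℕ → ℕ) (hq : ∀ n, 0 < q n) (hqtop : Tendsto q atTop atTop)
    (ε : ℕ → ℝ) (hε : ∀ n, 0 < ε n)
    (hεlim : Tendsto (fun n => (ε n) ^ (1 / (q n : ℝ))) atTop (nhds invA))
    (B : ℕ → ℝ) (hB : ∀ n, 0 < B n)
    (hBlim : Filter.limsup
      (fun n => ENNReal.ofReal ((B n) ^ (1 / (q n : ℝ)))) Filter.atTop ≤ 1)
    (η : ℕ → ℂ) (hη : ∀ n, ‖η n‖ ≤ B n * ε n)
    (k : ℕ → ℂ → ℂ) (hkdiff : ∀ n, DifferentiableOn ℂ (k n) (Metric.ball 0 r0))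
    (hkbd : ∀ n, ∀ z ∈ Metric.ball (0 : ℂ) r0, ‖k n z‖ ≤ B n)
    (g : ℕ → ℂ → ℂ)
    (hg : ∀ n z, g n z = z + 2 * Real.pi * Complex.I * (q n : ℂ) * z *
      ((ε n : ℂ) - z ^ q n) * (1 + η n + ((ε n : ℂ) - z ^ q n) * k n z)) :
    ∃ N : ℕ, ∀ n ≥ N, ∀ h : ℂ → ℂ,
      DifferentiableOn ℂ h (QnSet (q n) (ε n)) →
      (∀ Z ∈ QnSet (q n) (ε n), h Z ^ q n =
        (ε n : ℂ) /
          (1 - Complex.exp (-(2 * Real.pi * Complex.I * ((q n : ℝ) ^ 2 * ε n : ℝ) * Z)))) →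
      ∀ Z ∈ QnSector (q n) (ε n) (1 / (2 * Real.pi * (q n : ℝ) ^ 2 * r ^ q n)),
        h Z ∈ Metric.ball (0 : ℂ) r0 ∧
        ∃ W ∈ Metric.ball Z (1 / (2 * Real.pi * (q n : ℝ) ^ 2 * r' ^ q n)),
          h W = g n (h Z) ∧ ‖W - Z - 1‖ < 1 / 4 :=
  statement16_general invA r r' r0 h0 h1 h2 h3 h4 q hq hqtop ε hε hεlim B hB hBlim η hη k hkbd g hg
end
end
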